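/- arXiv:2102.06795 — 4 statements merged into one kernel-verified Lean document; each statement's English description precedes it below -/
import Mathlib

section
/- The positive part of log|f′| is not integrable with respect to μ̃_P: ∫ max{0, log|f′(x)|} dμ̃_P(x) = +∞. (Here log|f′(x)| is defined for μ̃_P-almost every x, since μ̃_P({c̃}) = 0 and f is differentiable off c̃.) -/
/-!
Conjugating back by `h`, `|f' (h y)| = |h' (T y)| * λ / |h' y|`; near the turning point the
numerator stays away from zero and `h' y` is at most of order `|y| ^ α`, so `log⁺ |f' ∘ h|`
dominates `α * (-log |y|)` up to constants and it suffices that `-log |y|` is not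
`μ_P`-integrable.

For the tent map this comes from the Fibonacci combinatorics. The closest returns
`d k = |c (S k)|` satisfy `d k + d (k + 2) = λ ^ S k * d (k + 1)`, so `-log |y| ≳ S k * log λ`
on `[-d (k + 1), d (k + 1)]`. On the other hand, every orbit segment of length `S (k + 1)` passes
through a time whose greedy Fibonacci expansion has only parts `≥ S (k + 1)`, and at such a time
the orbit is within `d k` of the turning point; by invariance
`μ_P [-d k, d k] ≥ 1 / (S (k + 1) + 1)`. Summing over the nested intervals, the layers contribute
`≳ log λ * S k / S (k + 4) ≥ log λ / 14` each.
-/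

open MeasureTheory Filter Set Topology
open scoped ENNReal

/-- `sfib k` is the paper's `S k`: `1, 2, 3, 5, 8, …`. -/
def sfib (k : ℕ) : ℕ := Nat.fib (k + 2)

lemma sfib_add_two (k : ℕ) : sfib (k + 2) = sfib (k + 1) + sfib k := by
  rw [sfib, sfib, sfib, Nat.fib_add_two, add_comm]

lemma sfib_pos (k : ℕ) : 0 < sfib k := Nat.fib_pos.2 (by omega)

lemma sfib_strictMono : StrictMono sfib := fun _ _ h => Nat.fib_add_two_strictMono h

lemma sfib_mono : Monotone sfib := sfib_strictMono.monotone

lemma sfib_succ_le_two_mul (k : ℕ) : sfib (k + 1) ≤ 2 * sfib k := by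
  rcases k with _ | k
  · decide
  · have : sfib k ≤ sfib (k + 1) := sfib_mono k.le_succ
    rw [sfib_add_two]
    omega

lemma sfib_add_four_lt (k : ℕ) : sfib (k + 4) < 14 * sfib k := by
  have h₁ : sfib (k + 4) = sfib (k + 3) + sfib (k + 2) := sfib_add_two (k + 2)
  have h₂ : sfib (k + 3) = sfib (k + 2) + sfib (k + 1) := sfib_add_two (k + 1)
  have h₃ := sfib_add_two k
  have := sfib_succ_le_two_mul k
  have := sfib_pos k
  omega

lemma exists_sfib_le_lt {n : ℕ} (hn : 1 ≤ n) : ∃ j, sfib j ≤ n ∧ n < sfib (j + 1) := by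
  have hex : ∃ j, n < sfib (j + 1) := ⟨n, sfib_strictMono.id_le (n + 1)⟩
  refine ⟨Nat.find hex, ?_, Nat.find_spec hex⟩
  cases hj : Nat.find hex with
  | zero => simpa [sfib] using hn
  | succ j => simpa using Nat.find_min hex (hj ▸ j.lt_succ_self)

/-- Greedy sums of the `sfib j` with `j ≥ k`: `sfib j + m < sfib (j + 1)` says that `sfib j` is the
largest part. -/
inductive IsZeckendorfSum (k : ℕ) : ℕ → Prop
  | zero : IsZeckendorfSum k 0
  | add {j m : ℕ} : k ≤ j → sfib j + m < sfib (j + 1) → IsZeckendorfSum k m →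
      IsZeckendorfSum k (sfib j + m)

namespace IsZeckendorfSum

lemma single {k j : ℕ} (h : k ≤ j) : IsZeckendorfSum k (sfib j) :=
  add h (by simpa using sfib_strictMono j.lt_succ_self) zero

lemma exists_add_le (k n : ℕ) : ∃ i ≤ sfib k, IsZeckendorfSum k (n + i) := by
  induction n using Nat.strong_induction_on with
  | _ n ih =>
    by_cases hnk : n ≤ sfib k
    · exact ⟨sfib k - n, by omega, by rw [Nat.add_sub_cancel' hnk]; exact single le_rfl⟩
    obtain ⟨j, hjn, hnj⟩ := exists_sfib_le_lt (n := n) (by have := sfib_pos k; omega)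
    have hkj : k ≤ j := Nat.lt_succ_iff.1 <| sfib_strictMono.lt_iff_lt.1
      (show sfib k < sfib (j + 1) by omega)
    obtain ⟨i, hik, hi⟩ := ih (n - sfib j) (by have := sfib_pos j; omega)
    by_cases hfit : sfib j + (n - sfib j + i) < sfib (j + 1)
    · refine ⟨i, hik, ?_⟩
      rw [show n + i = sfib j + (n - sfib j + i) by omega]
      exact add hkj hfit hi
    · refine ⟨sfib (j + 1) - n, by omega, ?_⟩
      rw [Nat.add_sub_cancel' hnj.le]
      exact single (by omega)

end IsZeckendorfSum

def tent (lam x : ℝ) : ℝ := lam * (1 - |x|) - 1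

def tentOrbit (lam : ℝ) (n : ℕ) : ℝ := (tent lam)^[n] 0

def closestReturn (lam : ℝ) (k : ℕ) : ℝ := |tentOrbit lam (sfib k)|

/-- The paper's index `k` is `k + 2` here. -/
structure HasFibonacciRecurrence (lam : ℝ) : Prop where
  same_side : ∀ k j, 1 ≤ j → j < sfib k → 0 < tentOrbit lam (sfib (k + 1) + j) * tentOrbit lam j
  opposite_side : ∀ k, tentOrbit lam (sfib (k + 2)) * tentOrbit lam (sfib k) < 0
  abs_lt : ∀ k, |tentOrbit lam (sfib (k + 1))| < |tentOrbit lam (sfib k)|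

section Tent

variable {lam : ℝ}

lemma continuous_tent (lam : ℝ) : Continuous (tent lam) := by
  unfold tent
  fun_prop

lemma abs_tent_le_one (h0 : 0 ≤ lam) (h2 : lam ≤ 2) {x : ℝ} (hx : |x| ≤ 1) : |tent lam x| ≤ 1 := by
  unfold tent
  rw [abs_le]
  constructor <;> nlinarith [abs_nonneg x]

lemma abs_tent_sub_tent (lam : ℝ) {x y : ℝ} (hxy : 0 ≤ x * y) :
    |tent lam x - tent lam y| = |lam| * |x - y| := by
  have hxy' : |x| * |y| = x * y := by rw [← abs_mul, abs_of_nonneg hxy]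
  have key : |(|x| - |y|)| = |x - y| := by
    rw [← sq_eq_sq_iff_abs_eq_abs]
    linear_combination sq_abs x + sq_abs y - 2 * hxy'
  rw [show tent lam x - tent lam y = -(lam * (|x| - |y|)) by unfold tent; ring, abs_neg, abs_mul,
    key]

lemma tentOrbit_zero (lam : ℝ) : tentOrbit lam 0 = 0 := rfl

lemma tentOrbit_succ (lam : ℝ) (n : ℕ) : tentOrbit lam (n + 1) = tent lam (tentOrbit lam n) :=
  Function.iterate_succ_apply' _ _ _

lemma iterate_tent_tentOrbit (lam : ℝ) (i n : ℕ) :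
    (tent lam)^[i] (tentOrbit lam n) = tentOrbit lam (i + n) :=
  (Function.iterate_add_apply _ _ _ _).symm

lemma abs_tentOrbit_le_one (h0 : 0 ≤ lam) (h2 : lam ≤ 2) (n : ℕ) : |tentOrbit lam n| ≤ 1 := by
  induction n with
  | zero => simp [tentOrbit_zero]
  | succ n ih => rw [tentOrbit_succ]; exact abs_tent_le_one h0 h2 ih

lemma eventually_le_pow_sfib (hlam : 1 < lam) (a : ℝ) : ∀ᶠ j in atTop, a ≤ lam ^ sfib j :=
  ((tendsto_pow_atTop_atTop_of_one_lt hlam).comp sfib_strictMono.tendsto_atTop).eventually_ge_atTop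
    a

end Tent

namespace HasFibonacciRecurrence

variable {lam : ℝ}

lemma closestReturn_pos (hF : HasFibonacciRecurrence lam) (k : ℕ) : 0 < closestReturn lam k := by
  refine abs_pos.2 fun h => ?_
  simpa [h] using hF.opposite_side k

lemma closestReturn_antitone (hF : HasFibonacciRecurrence lam) : Antitone (closestReturn lam) :=
  antitone_nat_of_succ_le fun k => (hF.abs_lt k).le

/-- Before time `sfib j` both orbits stay on one side of `0`, where `T` expands distances by
`lam`. -/
lemma abs_tentOrbit_sfib_add_sub (hF : HasFibonacciRecurrence lam) (hlam : 0 ≤ lam) {j t : ℕ}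
    (ht : t ≤ sfib j) :
    |tentOrbit lam (sfib (j + 1) + t) - tentOrbit lam t| = lam ^ t * closestReturn lam (j + 1) := by
  induction t with
  | zero => simp [closestReturn, tentOrbit_zero]
  | succ t ih =>
    have hside : 0 ≤ tentOrbit lam (sfib (j + 1) + t) * tentOrbit lam t := by
      rcases t.eq_zero_or_pos with rfl | ht0
      · simp [tentOrbit_zero]
      · exact (hF.same_side j t ht0 (by omega)).le
    rw [← add_assoc, tentOrbit_succ, tentOrbit_succ, abs_tent_sub_tent _ hside, ih (by omega),
      abs_of_nonneg hlam, pow_succ]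
    ring

lemma closestReturn_add_closestReturn (hF : HasFibonacciRecurrence lam) (hlam : 0 ≤ lam) (j : ℕ) :
    closestReturn lam j + closestReturn lam (j + 2) = lam ^ sfib j * closestReturn lam (j + 1) := by
  rw [← hF.abs_tentOrbit_sfib_add_sub hlam le_rfl, ← sfib_add_two, closestReturn, closestReturn]
  rcases mul_neg_iff.1 (hF.opposite_side j) with ⟨ha, hb⟩ | ⟨ha, hb⟩
  · rw [abs_of_pos ha, abs_of_neg hb, abs_of_pos (by linarith)]
    ring
  · rw [abs_of_neg ha, abs_of_pos hb, abs_of_neg (by linarith)]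
    ring

lemma pow_mul_closestReturn_succ_le (hF : HasFibonacciRecurrence lam) (hlam : 0 ≤ lam) (j : ℕ) :
    lam ^ sfib j * closestReturn lam (j + 1) ≤ 2 * closestReturn lam j := by
  rw [← hF.closestReturn_add_closestReturn hlam]
  linarith [hF.closestReturn_antitone (by omega : j ≤ j + 2)]

lemma three_mul_closestReturn_succ_le (hF : HasFibonacciRecurrence lam) (hlam : 0 ≤ lam) {j : ℕ}
    (hj : 6 ≤ lam ^ sfib j) : 3 * closestReturn lam (j + 1) ≤ closestReturn lam j := by
  nlinarith [hF.pow_mul_closestReturn_succ_le hlam j, hF.closestReturn_pos (j + 1)]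

lemma log_closestReturn_succ_le (hF : HasFibonacciRecurrence lam) (hlam : 0 < lam) (j : ℕ) :
    Real.log (closestReturn lam (j + 1)) ≤
      Real.log (2 * closestReturn lam 0) - sfib j * Real.log lam := by
  have hle : lam ^ sfib j * closestReturn lam (j + 1) ≤ 2 * closestReturn lam 0 :=
    (hF.pow_mul_closestReturn_succ_le hlam.le j).trans
      (by linarith [hF.closestReturn_antitone j.zero_le])
  have := Real.log_le_log (by have := hF.closestReturn_pos (j + 1); positivity) hle
  rw [Real.log_mul (by positivity) (hF.closestReturn_pos _).ne', Real.log_pow] at this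
  linarith

/-- Adding the parts of a greedy sum one at a time, from the smallest, moves the orbit by at most a
geometric series, because the closest returns eventually decay by a factor three. -/
lemma eq_zero_or_abs_tentOrbit_le_of_isZeckendorfSum (hF : HasFibonacciRecurrence lam)
    (hlam : 1 ≤ lam) {k : ℕ}
    (hk : ∀ j, k ≤ j → 3 * closestReturn lam (j + 1) ≤ closestReturn lam j) {n : ℕ}
    (hn : IsZeckendorfSum k n) :
    n = 0 ∨ ∃ j, k ≤ j ∧ sfib j ≤ n ∧ n < sfib (j + 1) ∧
      |tentOrbit lam n| + 2 * closestReturn lam (j + 1) ≤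
        closestReturn lam k + 2 * closestReturn lam (k + 1) := by
  have hd := hF.closestReturn_antitone
  induction hn with
  | zero => exact Or.inl rfl
  | @add j m hkj hjm _ ih =>
    refine Or.inr ⟨j, hkj, by omega, hjm, ?_⟩
    rcases ih with rfl | ⟨i, hki, him, hmi, hm⟩
    · rw [add_zero]
      change closestReturn lam j + _ ≤ _
      linarith [hd hkj, hd (by omega : k + 1 ≤ j + 1)]
    obtain ⟨p, rfl⟩ : ∃ p, j = p + 1 := by
      rcases j with _ | p
      · have : sfib (0 + 1) = 2 := rfl
        have : sfib 0 = 1 := rfl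
        have := sfib_pos i
        omega
      · exact ⟨p, rfl⟩
    have hmp : m < sfib p := by rw [sfib_add_two] at hjm; omega
    have hip : i + 1 ≤ p := sfib_strictMono.lt_iff_lt.1 (by omega)
    have hshadow := hF.abs_tentOrbit_sfib_add_sub (by linarith) hmp.le
    have herr :
        lam ^ m * closestReturn lam (p + 1) ≤ lam ^ sfib (i + 1) * closestReturn lam (i + 2) :=
      mul_le_mul (pow_le_pow_right₀ hlam hmi.le) (hd (by omega)) (hF.closestReturn_pos _).le
        (by positivity)
    have hid : closestReturn lam (i + 1) + closestReturn lam (i + 3) =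
        lam ^ sfib (i + 1) * closestReturn lam (i + 2) :=
      hF.closestReturn_add_closestReturn (by linarith) (i + 1)
    have hdecay : 3 * closestReturn lam (i + 3) ≤ closestReturn lam (i + 2) := hk (i + 2) (by omega)
    have htri := abs_sub_abs_le_abs_sub (tentOrbit lam (sfib (p + 1) + m)) (tentOrbit lam m)
    have : closestReturn lam (p + 2) ≤ closestReturn lam (i + 3) := hd (by omega)
    linarith [hd (by omega : i + 1 ≤ i + 2)]

lemma abs_tentOrbit_le_of_isZeckendorfSum (hF : HasFibonacciRecurrence lam) (hlam : 1 ≤ lam) {k : ℕ}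
    (hk : ∀ j, k ≤ j → 3 * closestReturn lam (j + 1) ≤ closestReturn lam j) {n : ℕ}
    (hn : IsZeckendorfSum (k + 1) n) : |tentOrbit lam n| ≤ closestReturn lam k := by
  rcases hF.eq_zero_or_abs_tentOrbit_le_of_isZeckendorfSum hlam (fun j hj => hk j (by omega))
    hn with rfl | ⟨j, -, -, -, h⟩
  · simpa [tentOrbit_zero] using (hF.closestReturn_pos k).le
  · linarith [hk k le_rfl, hk (k + 1) (by omega), hF.closestReturn_pos (j + 1),
      hF.closestReturn_antitone (by omega : k + 1 ≤ k + 2)]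

lemma exists_abs_tentOrbit_add_le (hF : HasFibonacciRecurrence lam) (hlam : 1 ≤ lam) {k : ℕ}
    (hk : ∀ j, k ≤ j → 3 * closestReturn lam (j + 1) ≤ closestReturn lam j) (n : ℕ) :
    ∃ i ≤ sfib (k + 1), |tentOrbit lam (i + n)| ≤ closestReturn lam k := by
  obtain ⟨i, hi, hz⟩ := IsZeckendorfSum.exists_add_le (k + 1) n
  exact ⟨i, hi, add_comm n i ▸ hF.abs_tentOrbit_le_of_isZeckendorfSum hlam hk hz⟩

end HasFibonacciRecurrence

section Measure

variable {X : Type*} [MeasurableSpace X] {μ : Measure X}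

/-- `N + 1` preimages of `I` cover the orbit closure, which carries all of `μ`. -/
lemma inv_le_measure_of_forall_exists_iterate_mem [TopologicalSpace X] [OpensMeasurableSpace X]
    [IsProbabilityMeasure μ] {T : X → X} (hT : Continuous T) (hμ : MeasurePreserving T μ μ)
    {x₀ : X} (hsupp : μ (closure (range fun n => T^[n] x₀))ᶜ = 0) {I : Set X} (hI : IsClosed I)
    {N : ℕ} (hvisit : ∀ n, ∃ i ≤ N, T^[i] (T^[n] x₀) ∈ I) : ((N : ℝ≥0∞) + 1)⁻¹ ≤ μ I := by
  set G := ⋃ i ∈ Finset.range (N + 1), T^[i] ⁻¹' I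
  have hG : IsClosed G := isClosed_biUnion_finset fun i _ => hI.preimage (hT.iterate i)
  have horbit : closure (range fun n => T^[n] x₀) ⊆ G := by
    refine closure_minimal ?_ hG
    rintro _ ⟨n, rfl⟩
    obtain ⟨i, hi, hmem⟩ := hvisit n
    exact mem_biUnion (Finset.mem_range.2 (Nat.lt_succ_of_le hi)) hmem
  have hcover : 1 ≤ μ G := by
    rw [← (prob_compl_eq_zero_iff isClosed_closure.measurableSet).1 hsupp]
    exact measure_mono horbit
  have hG_le : μ G ≤ (N + 1) * μ I := by
    refine (measure_biUnion_finset_le _ _).trans_eq ?_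
    simp [(hμ.iterate _).measure_preimage hI.measurableSet.nullMeasurableSet]
  rw [ENNReal.inv_le_iff_le_mul (by simp) (by simp)]
  exact hcover.trans hG_le

lemma tsum_le_lintegral_of_antitone {g : X → ℝ≥0∞} {I : ℕ → Set X} (hI : Antitone I)
    (hImeas : ∀ k, MeasurableSet (I k)) {L : ℕ → ℝ} (hL : Monotone L) (hL0 : 0 ≤ L 0)
    (hg : ∀ᵐ x ∂μ, ∀ k, x ∈ I k → ENNReal.ofReal (L k) ≤ g x) :
    ∑' k, ENNReal.ofReal (L (k + 1) - L k) * μ (I (k + 1)) ≤ ∫⁻ x, g x ∂μ := by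
  set layer : ℕ → X → ℝ≥0∞ := fun k =>
    (I (k + 1)).indicator fun _ => ENNReal.ofReal (L (k + 1) - L k)
  have hpt : ∀ N x, (∀ k, x ∈ I k → ENNReal.ofReal (L k) ≤ g x) →
      ∑ k ∈ Finset.range N, layer k x ≤ g x := by
    intro N x hx
    induction N with
    | zero => simp
    | succ N ih =>
      by_cases hxN : x ∈ I (N + 1)
      · have hall : ∀ k ∈ Finset.range (N + 1), layer k x = ENNReal.ofReal (L (k + 1) - L k) :=
          fun k hk => indicator_of_mem (hI (by simp at hk; omega) hxN) _
        rw [Finset.sum_congr rfl hall,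
          ← ENNReal.ofReal_sum_of_nonneg fun k _ => sub_nonneg.2 (hL k.le_succ),
          Finset.sum_range_sub]
        exact (ENNReal.ofReal_le_ofReal (by linarith)).trans (hx _ hxN)
      · rw [Finset.sum_range_succ, show layer N x = 0 from indicator_of_notMem hxN _, add_zero]
        exact ih
  refine ENNReal.tsum_le_of_sum_range_le fun N => ?_
  calc ∑ k ∈ Finset.range N, ENNReal.ofReal (L (k + 1) - L k) * μ (I (k + 1))
      = ∫⁻ x, ∑ k ∈ Finset.range N, layer k x ∂μ := by
        rw [lintegral_finsetSum _ fun k _ => measurable_const.indicator (hImeas _)]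
        simp [lintegral_indicator (hImeas _)]
    _ ≤ ∫⁻ x, g x ∂μ := lintegral_mono_ae (hg.mono (hpt N))

lemma lintegral_ofReal_eq_top_of_le [IsFiniteMeasure μ] {φ G : X → ℝ}
    (hφ : ∫⁻ x, ENNReal.ofReal (φ x) ∂μ = ⊤) {a b : ℝ} (ha : 0 ≤ a)
    (hle : ∀ᵐ x ∂μ, φ x ≤ a * G x + b) : ∫⁻ x, ENNReal.ofReal (G x) ∂μ = ⊤ := by
  by_contra hG
  have hbound : ∫⁻ x, ENNReal.ofReal (φ x) ∂μ ≤
      ENNReal.ofReal a * ∫⁻ x, ENNReal.ofReal (G x) ∂μ + ENNReal.ofReal b * μ univ :=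
    calc _ ≤ ∫⁻ x, (ENNReal.ofReal a * ENNReal.ofReal (G x) + ENNReal.ofReal b) ∂μ := by
          refine lintegral_mono_ae (hle.mono fun x hx => ?_)
          rw [← ENNReal.ofReal_mul ha]
          exact (ENNReal.ofReal_le_ofReal hx).trans ENNReal.ofReal_add_le
      _ = _ := by
          rw [lintegral_add_right _ measurable_const,
            lintegral_const_mul' _ _ ENNReal.ofReal_ne_top, lintegral_const]
  rw [hφ, top_le_iff] at hbound
  exact ENNReal.add_ne_top.2 ⟨ENNReal.mul_ne_top ENNReal.ofReal_ne_top hG,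
    ENNReal.mul_ne_top ENNReal.ofReal_ne_top (measure_ne_top _ _)⟩ hbound

lemma ofReal_div_le_mul {a : ℝ} {N : ℕ} {m : ℝ≥0∞} (hm : ((N : ℝ≥0∞) + 1)⁻¹ ≤ m) :
    ENNReal.ofReal (a / (N + 1)) ≤ ENNReal.ofReal a * m := by
  rw [ENNReal.ofReal_div_of_pos (by positivity), div_eq_mul_inv]
  gcongr
  simpa [ENNReal.ofReal_add] using hm

lemma ContinuousOn.aemeasurable_of_ae_mem [TopologicalSpace X] [OpensMeasurableSpace X]
    {Y : Type*} [TopologicalSpace Y] [MeasurableSpace Y] [BorelSpace Y] {f : X → Y} {s : Set X}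
    (hf : ContinuousOn f s) (hs : MeasurableSet s) (hμ : ∀ᵐ x ∂μ, x ∈ s) : AEMeasurable f μ := by
  rw [← Measure.restrict_eq_self_of_ae_mem hμ]
  exact hf.aemeasurable hs

end Measure

namespace HasFibonacciRecurrence

variable {lam : ℝ}

lemma inv_le_measure_Icc (hF : HasFibonacciRecurrence lam) (hlam : 1 ≤ lam) {μ : Measure ℝ}
    [IsProbabilityMeasure μ] (hμ : MeasurePreserving (tent lam) μ μ)
    (hsupp : μ (closure (range (tentOrbit lam)))ᶜ = 0) {k : ℕ}
    (hk : ∀ j, k ≤ j → 3 * closestReturn lam (j + 1) ≤ closestReturn lam j) :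
    ((sfib (k + 1) : ℝ≥0∞) + 1)⁻¹ ≤ μ (Icc (-closestReturn lam k) (closestReturn lam k)) := by
  refine inv_le_measure_of_forall_exists_iterate_mem (continuous_tent lam) hμ hsupp isClosed_Icc
    fun n => ?_
  obtain ⟨i, hi, hle⟩ := hF.exists_abs_tentOrbit_add_le hlam hk n
  exact ⟨i, hi, abs_le.1 (iterate_tent_tentOrbit lam i n ▸ hle)⟩

lemma le_neg_log_abs_of_mem_Icc (hF : HasFibonacciRecurrence lam) (hlam : 0 < lam) {j : ℕ}
    {y : ℝ} (hy : y ≠ 0)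
    (hyj : y ∈ Icc (-closestReturn lam (j + 1)) (closestReturn lam (j + 1))) :
    sfib j * Real.log lam - Real.log (2 * closestReturn lam 0) ≤ -Real.log |y| := by
  have := Real.log_le_log (abs_pos.2 hy) (abs_le.2 hyj)
  linarith [hF.log_closestReturn_succ_le hlam j]

lemma ofReal_log_div_le_mul_measure_Icc (hF : HasFibonacciRecurrence lam) (hlam : 1 < lam)
    {μ : Measure ℝ} [IsProbabilityMeasure μ] (hμ : MeasurePreserving (tent lam) μ μ)
    (hsupp : μ (closure (range (tentOrbit lam)))ᶜ = 0) {t : ℕ}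
    (hk : ∀ j, t ≤ j → 3 * closestReturn lam (j + 1) ≤ closestReturn lam j) :
    ENNReal.ofReal (Real.log lam / 14) ≤ ENNReal.ofReal (sfib t * Real.log lam) *
      μ (Icc (-closestReturn lam (t + 3)) (closestReturn lam (t + 3))) := by
  have hμI := hF.inv_le_measure_Icc hlam.le hμ hsupp (k := t + 3) fun j hj => hk j (by omega)
  refine le_trans (ENNReal.ofReal_le_ofReal ?_) (ofReal_div_le_mul hμI)
  rw [le_div_iff₀ (by positivity)]
  have : (sfib (t + 3 + 1) : ℝ) + 1 ≤ 14 * sfib t := by exact_mod_cast sfib_add_four_lt t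
  nlinarith [Real.log_pos hlam]

/-- A `μ`-mass of order `1 / sfib k` lies within `closestReturn lam k ≈ lam ^ (-sfib (k - 1))` of
the turning point. -/
theorem lintegral_neg_log_abs_eq_top (hF : HasFibonacciRecurrence lam) (hlam : 1 < lam)
    {μ : Measure ℝ} [IsProbabilityMeasure μ] (hμ : MeasurePreserving (tent lam) μ μ)
    (hsupp : μ (closure (range (tentOrbit lam)))ᶜ = 0) (hatom : μ {0} = 0) :
    ∫⁻ y, ENNReal.ofReal (-Real.log |y|) ∂μ = ⊤ := by
  set d := closestReturn lam
  have hlog : 0 < Real.log lam := Real.log_pos hlam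
  obtain ⟨K, hK⟩ := eventually_atTop.1
    ((eventually_le_pow_sfib hlam 6).and (eventually_le_pow_sfib hlam (2 * d 0)))
  have hk : ∀ j, K ≤ j → 3 * d (j + 1) ≤ d j :=
    fun j hj => hF.three_mul_closestReturn_succ_le (by linarith) (hK j hj).1
  set I : ℕ → Set ℝ := fun k => Icc (-d (K + k + 2)) (d (K + k + 2))
  set L : ℕ → ℝ := fun k => sfib (K + k + 1) * Real.log lam - Real.log (2 * d 0)
  have hLsucc (k : ℕ) : L (k + 1) - L k = sfib (K + k) * Real.log lam := by
    simp only [L, show K + (k + 1) + 1 = K + k + 2 by ring, sfib_add_two, Nat.cast_add]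
    ring
  have hlower := tsum_le_lintegral_of_antitone (μ := μ)
    (g := fun y => ENNReal.ofReal (-Real.log |y|)) (I := I) (L := L)
    (fun a b hab => Icc_subset_Icc (neg_le_neg (hF.closestReturn_antitone (by omega)))
      (hF.closestReturn_antitone (by omega)))
    (fun k => measurableSet_Icc)
    (monotone_nat_of_le_succ fun k => by
      linarith [hLsucc k, (by positivity : (0 : ℝ) ≤ sfib (K + k) * Real.log lam)])
    (by
      have := Real.log_le_log (by linarith [hF.closestReturn_pos 0]) (hK (K + 1) (by omega)).2
      rw [Real.log_pow] at this
      simp only [L, add_zero]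
      linarith)
    (by
      filter_upwards [measure_eq_zero_iff_ae_notMem.1 hatom] with y hy k hyk
      exact ENNReal.ofReal_le_ofReal (hF.le_neg_log_abs_of_mem_Icc (by linarith) hy hyk))
  have hlayer : ENNReal.ofReal (Real.log lam / 14) ≠ 0 := (ENNReal.ofReal_pos.2 (by positivity)).ne'
  refine top_le_iff.1 (le_trans ?_ hlower)
  rw [← ENNReal.tsum_const_eq_top_of_ne_zero (α := ℕ) hlayer]
  refine ENNReal.tsum_le_tsum fun k => ?_
  rw [hLsucc k]
  exact hF.ofReal_log_div_le_mul_measure_Icc hlam hμ hsupp fun j hj => hk j (by omega)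

end HasFibonacciRecurrence

section Conjugacy

lemma StrictMonoOn.mapsTo_Ioo_of_mapsTo {α : Type*} [Preorder α] {h : α → α} {a b : α}
    (hmono : StrictMonoOn h (Icc a b)) (hmaps : MapsTo h (Icc a b) (Icc a b)) :
    MapsTo h (Ioo a b) (Ioo a b) := fun x hx => by
  have hab : a ≤ b := (hx.1.trans hx.2).le
  exact Ioo_subset_Ioo (hmaps (left_mem_Icc.2 hab)).1 (hmaps (right_mem_Icc.2 hab)).2
    (hmono.mapsTo_Ioo hx)

lemma StrictMonoOn.continuousAt_of_invOn {h hinv : ℝ → ℝ} {a b y : ℝ}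
    (hmono : StrictMonoOn h (Icc a b)) (hbij : BijOn h (Icc a b) (Icc a b))
    (hInv : InvOn hinv h (Icc a b) (Icc a b)) (hy : y ∈ Ioo a b) : ContinuousAt hinv (h y) := by
  have hinvmaps : MapsTo hinv (Icc a b) (Icc a b) := hInv.1.mapsTo hbij.surjOn
  have hmonoinv : MonotoneOn hinv (Icc a b) := fun u hu v hv huv =>
    (hmono.le_iff_le (hinvmaps hu) (hinvmaps hv)).1 (by rwa [hInv.2 hu, hInv.2 hv])
  have hhy := hmono.mapsTo_Ioo_of_mapsTo hbij.mapsTo hy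
  refine continuousAt_of_monotoneOn_of_image_mem_nhds hmonoinv (Icc_mem_nhds hhy.1 hhy.2) ?_
  rw [hInv.1 (Ioo_subset_Icc_self hy)]
  exact mem_of_superset (Icc_mem_nhds hy.1 hy.2) fun x hx => ⟨h x, hbij.mapsTo hx, hInv.1 hx⟩

lemma HasDerivAt.conj {𝕜 : Type*} [NontriviallyNormedField 𝕜] {h hinv g : 𝕜 → 𝕜}
    {y h'y h'gy g' : 𝕜} (hh : HasDerivAt h h'y y) (hhg : HasDerivAt h h'gy (g y))
    (hg : HasDerivAt g g' y) (hne : h'y ≠ 0) (hcont : ContinuousAt hinv (h y))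
    (hleft : hinv (h y) = y) (hright : ∀ᶠ z in 𝓝 (h y), h (hinv z) = z) :
    HasDerivAt (fun z => h (g (hinv z))) (h'gy * (g' * h'y⁻¹)) (h y) := by
  rw [← hleft] at hh hhg hg
  have hinner : HasDerivAt (g ∘ hinv) (g' * h'y⁻¹) (h y) :=
    hg.comp _ (hh.of_local_left_inverse hcont hne hright)
  exact hhg.comp (h y) hinner

lemma hasDerivAt_tent (lam : ℝ) {y : ℝ} (hy : y ≠ 0) :
    HasDerivAt (tent lam) (lam * -(SignType.sign y : ℝ)) y :=
  (((hasDerivAt_abs hy).const_sub 1).const_mul lam).sub_const 1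

variable {lam : ℝ} {h h' hinv : ℝ → ℝ}

lemma abs_deriv_conj_tent (hlam : 0 ≤ lam) (hmono : StrictMonoOn h (Icc (-1) 1))
    (hbij : BijOn h (Icc (-1) 1) (Icc (-1) 1))
    (hhd : ∀ x ∈ Icc (-1 : ℝ) 1, HasDerivWithinAt h (h' x) (Icc (-1 : ℝ) 1) x)
    (hInv : InvOn hinv h (Icc (-1) 1) (Icc (-1) 1)) {y : ℝ} (hy : y ∈ Ioo (-1) 1) (hy0 : y ≠ 0)
    (hTy : tent lam y ∈ Ioo (-1) 1) (h'y : h' y ≠ 0) :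
    |deriv (fun x => h (tent lam (hinv x))) (h y)| = |h' (tent lam y)| * lam / |h' y| := by
  have hderiv (x : ℝ) (hx : x ∈ Ioo (-1 : ℝ) 1) : HasDerivAt h (h' x) x :=
    (hhd x (Ioo_subset_Icc_self hx)).hasDerivAt (Icc_mem_nhds hx.1 hx.2)
  have hhy := hmono.mapsTo_Ioo_of_mapsTo hbij.mapsTo hy
  have hright : ∀ᶠ z in 𝓝 (h y), h (hinv z) = z :=
    Filter.mem_of_superset (Icc_mem_nhds hhy.1 hhy.2) fun z hz => hInv.2 hz
  rw [((hderiv y hy).conj (hderiv _ hTy) (hasDerivAt_tent lam hy0) h'y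
    (hmono.continuousAt_of_invOn hbij hInv hy) (hInv.1 (Ioo_subset_Icc_self hy)) hright).deriv]
  rcases hy0.lt_or_gt with hneg | hpos
  · simp [sign_neg hneg, abs_of_nonneg hlam, div_eq_mul_inv, mul_assoc]
  · simp [sign_pos hpos, abs_of_nonneg hlam, div_eq_mul_inv, mul_assoc]

lemma IsCompact.exists_pos_forall_le_abs {K : Set ℝ} (hK : IsCompact K) {g : ℝ → ℝ}
    (hg : ContinuousOn g K) (hne : ∀ x ∈ K, g x ≠ 0) : ∃ m > 0, ∀ x ∈ K, m ≤ |g x| := by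
  rcases K.eq_empty_or_nonempty with rfl | hKne
  · exact ⟨1, one_pos, by simp⟩
  obtain ⟨x₀, hx₀, hmin⟩ := hK.exists_isMinOn hKne hg.abs
  exact ⟨|g x₀|, abs_pos.2 (hne x₀ hx₀), fun x hx => hmin hx⟩

lemma pos_and_le_rpow_of_nonflat {αp αm M δ : ℝ}
    (hnfp : ∀ x ∈ Ioo (0 : ℝ) δ, Real.exp (-M) * x ^ αp ≤ h' x ∧ h' x ≤ Real.exp M * x ^ αp)
    (hnfm : ∀ x ∈ Ioo (-δ) (0 : ℝ),
      Real.exp (-M) * |x| ^ αm ≤ h' x ∧ h' x ≤ Real.exp M * |x| ^ αm)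
    {y : ℝ} (hy0 : y ≠ 0) (hyδ : |y| < δ) (hy1 : |y| ≤ 1) :
    0 < h' y ∧ h' y ≤ Real.exp M * |y| ^ min αp αm := by
  have hy := abs_pos.2 hy0
  rcases hy0.lt_or_gt with hneg | hpos
  · obtain ⟨hlow, hup⟩ := hnfm y ⟨by linarith [neg_abs_le y], hneg⟩
    exact ⟨lt_of_lt_of_le (by positivity) hlow, hup.trans <| mul_le_mul_of_nonneg_left
      (Real.rpow_le_rpow_of_exponent_ge hy hy1 (min_le_right _ _)) (Real.exp_pos M).le⟩
  · rw [abs_of_pos hpos] at hyδ hy1 ⊢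
    obtain ⟨hlow, hup⟩ := hnfp y ⟨hpos, hyδ⟩
    exact ⟨lt_of_lt_of_le (by positivity) hlow, hup.trans <| mul_le_mul_of_nonneg_left
      (Real.rpow_le_rpow_of_exponent_ge hpos hy1 (min_le_left _ _)) (Real.exp_pos M).le⟩

/-- `h'` is at most of order `|y| ^ α` at `y` and bounded away from zero near `T y ≈ c 1`. -/
lemma exists_log_abs_deriv_conj_tent_ge (hlam1 : 1 < lam) (hlam2 : lam ≤ 2)
    (hmono : StrictMonoOn h (Icc (-1) 1)) (hbij : BijOn h (Icc (-1) 1) (Icc (-1) 1))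
    (hhd : ∀ x ∈ Icc (-1 : ℝ) 1, HasDerivWithinAt h (h' x) (Icc (-1 : ℝ) 1) x)
    (hC1 : ContinuousOn h' (Icc (-1 : ℝ) 1)) (hInv : InvOn hinv h (Icc (-1) 1) (Icc (-1) 1))
    (h'ne : ∀ x ∈ Icc (-1 : ℝ) 1, x ≠ 0 → h' x ≠ 0) {αp αm M δ : ℝ} (hδ : 0 < δ)
    (hnfp : ∀ x ∈ Ioo (0 : ℝ) δ, Real.exp (-M) * x ^ αp ≤ h' x ∧ h' x ≤ Real.exp M * x ^ αp)
    (hnfm : ∀ x ∈ Ioo (-δ) (0 : ℝ),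
      Real.exp (-M) * |x| ^ αm ≤ h' x ∧ h' x ≤ Real.exp M * |x| ^ αm) :
    ∃ ε > 0, ∃ C, ∀ y, y ≠ 0 → |y| < ε →
      min αp αm * -Real.log |y| - C ≤ Real.log |deriv (fun x => h (tent lam (hinv x))) (h y)| := by
  set A := Icc ((lam - 1) / 2) (lam - 1)
  have hA : A ⊆ Icc (-1) 1 := Icc_subset_Icc (by linarith) (by linarith)
  obtain ⟨m, hm, hmA⟩ := isCompact_Icc.exists_pos_forall_le_abs (hC1.mono hA)
    fun x hx => h'ne x (hA hx) (by linarith [hx.1] : (0 : ℝ) < x).ne'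
  refine ⟨min δ ((lam - 1) / (2 * lam)), lt_min hδ (by apply div_pos <;> linarith),
    -Real.log (m * lam * Real.exp (-M)), fun y hy0 hyε => ?_⟩
  have hyδ := hyε.trans_le (min_le_left _ _)
  have hyc : lam * |y| ≤ (lam - 1) / 2 := by
    have := hyε.le.trans (min_le_right _ _)
    rw [le_div_iff₀ (by linarith)] at this
    linarith
  have hy1 : |y| < 1 := by nlinarith [abs_nonneg y]
  have hTy : tent lam y ∈ A := by
    unfold tent
    constructor <;> nlinarith [abs_nonneg y]
  obtain ⟨h'pos, h'le⟩ := pos_and_le_rpow_of_nonflat hnfp hnfm hy0 hyδ hy1.le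
  have hTyIoo : tent lam y ∈ Ioo (-1) 1 := by
    unfold tent
    constructor <;> nlinarith [abs_pos.2 hy0]
  have hderiv := abs_deriv_conj_tent (by linarith) hmono hbij hhd hInv (abs_lt.1 hy1) hy0
    hTyIoo h'pos.ne'
  have hlow : m * lam * Real.exp (-M) * |y| ^ (-min αp αm) ≤
      |deriv (fun x => h (tent lam (hinv x))) (h y)| := by
    rw [hderiv, abs_of_pos h'pos, Real.rpow_neg (abs_nonneg y), Real.exp_neg]
    calc m * lam * (Real.exp M)⁻¹ * (|y| ^ min αp αm)⁻¹
          = m * lam / (Real.exp M * |y| ^ min αp αm) := by field_simp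
      _ ≤ |h' (tent lam y)| * lam / h' y :=
          div_le_div₀ (by positivity) (by gcongr; exact hmA _ hTy) h'pos h'le
  have := Real.log_le_log (by positivity) hlow
  rw [Real.log_mul (by positivity) (by positivity), Real.log_rpow (abs_pos.2 hy0)] at this
  linarith

end Conjugacy

lemma neg_log_abs_le_of_forall_abs_lt {G : ℝ → ℝ} {α ε C : ℝ} (hα : 0 < α) (hε : 0 < ε)
    (hG : ∀ y, y ≠ 0 → |y| < ε → α * -Real.log |y| - C ≤ G y) {y : ℝ} (hy : y ≠ 0) :
    -Real.log |y| ≤ α⁻¹ * max 0 (G y) + max (C / α) (-Real.log ε) := by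
  have hmax : 0 ≤ α⁻¹ * max 0 (G y) := by positivity
  rcases lt_or_ge |y| ε with hsmall | hlarge
  · have : -Real.log |y| ≤ α⁻¹ * (max 0 (G y) + C) := by
      rw [le_inv_mul_iff₀ hα]
      linarith [hG y hy hsmall, le_max_right 0 (G y)]
    rw [mul_add, inv_mul_eq_div α C] at this
    linarith [le_max_left (C / α) (-Real.log ε)]
  · linarith [Real.log_le_log hε hlarge, le_max_right (C / α) (-Real.log ε)]

lemma closure_range_tentOrbit_subset {lam : ℝ} (h0 : 0 ≤ lam) (h2 : lam ≤ 2) :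
    closure (range (tentOrbit lam)) ⊆ Icc (-1) 1 :=
  closure_minimal (range_subset_iff.2 fun n => abs_le.1 (abs_tentOrbit_le_one h0 h2 n)) isClosed_Icc

lemma eq_sfib_of_int_recurrence {S : ℤ → ℕ} (hSm2 : S (-2) = 0) (hSm1 : S (-1) = 1)
    (hSrec : ∀ k : ℤ, 0 ≤ k → S k = S (k - 1) + S (k - 2)) (n : ℕ) : S n = sfib n := by
  have key : ∀ n : ℕ, S ((n : ℤ) - 2) = Nat.fib n ∧ S ((n : ℤ) - 1) = Nat.fib (n + 1) := by
    intro n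
    induction n with
    | zero => exact ⟨hSm2, hSm1⟩
    | succ n ih =>
      push_cast
      refine ⟨by rw [show (n : ℤ) + 1 - 2 = n - 1 by ring]; exact ih.2, ?_⟩
      rw [add_sub_cancel_right, hSrec n (by positivity), ih.1, ih.2, Nat.fib_add_two, add_comm]
  simpa [sfib] using (key (n + 2)).1

lemma mul_pos_of_pos_iff_pos {a b : ℝ} (ha : a ≠ 0) (hb : b ≠ 0) (h : 0 < a ↔ 0 < b) :
    0 < a * b := by
  rcases ha.lt_or_gt with ha | ha
  · exact mul_pos_of_neg_of_neg ha (hb.lt_or_gt.resolve_right fun hb => ha.not_gt (h.2 hb))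
  · exact mul_pos ha (h.1 ha)

lemma mul_neg_of_pos_iff_neg {a b : ℝ} (ha : a ≠ 0) (hb : b ≠ 0) (h : 0 < a ↔ b < 0) :
    a * b < 0 := by
  rcases ha.lt_or_gt with ha | ha
  · exact mul_neg_of_neg_of_pos ha (hb.lt_or_gt.resolve_left fun hb => ha.not_gt (h.2 hb))
  · exact mul_neg_of_pos_of_neg ha (h.1 ha)

lemma hasFibonacciRecurrence_of_int_indexed {lam : ℝ} {S : ℤ → ℕ} (hSm2 : S (-2) = 0)
    (hSm1 : S (-1) = 1) (hSrec : ∀ k : ℤ, 0 ≤ k → S k = S (k - 1) + S (k - 2))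
    (hcne : ∀ j : ℕ, 1 ≤ j → tentOrbit lam j ≠ 0)
    (hsame : ∀ k : ℤ, 2 ≤ k → ∀ j : ℕ, 1 ≤ j → j < S (k - 2) →
      (0 < tentOrbit lam (S (k - 1) + j) ↔ 0 < tentOrbit lam j))
    (hopp : ∀ k : ℤ, 2 ≤ k → (0 < tentOrbit lam (S k) ↔ tentOrbit lam (S (k - 2)) < 0))
    (hdec : ∀ k : ℤ, 0 ≤ k → |tentOrbit lam (S (k + 1))| < |tentOrbit lam (S k)|) :
    HasFibonacciRecurrence lam := by
  have hS := eq_sfib_of_int_recurrence hSm2 hSm1 hSrec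
  refine ⟨fun k j hj hjk => ?_, fun k => ?_, fun k => ?_⟩
  · have := hsame (k + 2) (by omega) j hj (by rwa [add_sub_cancel_right, hS])
    rw [show (k : ℤ) + 2 - 1 = ((k + 1 : ℕ) : ℤ) by push_cast; ring, hS] at this
    exact mul_pos_of_pos_iff_pos (hcne _ (by omega)) (hcne j hj) this
  · have := hopp (k + 2) (by omega)
    rw [add_sub_cancel_right, show (k : ℤ) + 2 = ((k + 2 : ℕ) : ℤ) by push_cast; ring, hS, hS]
      at this
    exact mul_neg_of_pos_iff_neg (hcne _ (sfib_pos _)) (hcne _ (sfib_pos _)) this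
  · have := hdec k (by omega)
    rwa [show (k : ℤ) + 1 = ((k + 1 : ℕ) : ℤ) by push_cast; ring, hS, hS] at this

theorem positive_part_log_deriv_not_integrable_general
    (lam : ℝ) (hlam1 : 1 < lam) (hlam2 : lam ≤ 2)
    (T : ℝ → ℝ) (hT : ∀ x : ℝ, T x = lam * (1 - |x|) - 1)
    (c : ℕ → ℝ) (hc : ∀ i : ℕ, c i = T^[i] 0)
    (S : ℤ → ℕ) (hSm2 : S (-2) = 0) (hSm1 : S (-1) = 1)
    (hSrec : ∀ k : ℤ, 0 ≤ k → S k = S (k - 1) + S (k - 2))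
    (hcne : ∀ j : ℕ, 1 ≤ j → c j ≠ 0)
    (hsame : ∀ k : ℤ, 2 ≤ k → ∀ j : ℕ, 1 ≤ j → j < S (k - 2) →
      (0 < c (S (k - 1) + j) ↔ 0 < c j))
    (hopp : ∀ k : ℤ, 2 ≤ k → (0 < c (S k) ↔ c (S (k - 2)) < 0))
    (hdec : ∀ k : ℤ, 0 ≤ k → |c (S (k + 1))| < |c (S k)|)
    (h : ℝ → ℝ) (h' : ℝ → ℝ) (hinv : ℝ → ℝ)
    (hmono : StrictMonoOn h (Set.Icc (-1 : ℝ) 1))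
    (hbij : Set.BijOn h (Set.Icc (-1 : ℝ) 1) (Set.Icc (-1 : ℝ) 1))
    (hhd : ∀ x ∈ Set.Icc (-1 : ℝ) 1, HasDerivWithinAt h (h' x) (Set.Icc (-1 : ℝ) 1) x)
    (hC1 : ContinuousOn h' (Set.Icc (-1 : ℝ) 1))
    (hinvl : ∀ x ∈ Set.Icc (-1 : ℝ) 1, hinv (h x) = x)
    (hinvr : ∀ y ∈ Set.Icc (-1 : ℝ) 1, h (hinv y) = y)
    (h'ne : ∀ x ∈ Set.Icc (-1 : ℝ) 1, x ≠ 0 → h' x ≠ 0)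
    (αp αm M δ : ℝ) (hαp : 0 < αp) (hαm : 0 < αm)
    (hδ : 0 < δ)
    (hnfp : ∀ x ∈ Set.Ioo (0 : ℝ) δ,
      Real.exp (-M) * x ^ αp ≤ h' x ∧ h' x ≤ Real.exp M * x ^ αp)
    (hnfm : ∀ x ∈ Set.Ioo (-δ) (0 : ℝ),
      Real.exp (-M) * |x| ^ αm ≤ h' x ∧ h' x ≤ Real.exp M * |x| ^ αm)
    (f : ℝ → ℝ) (hfdef : ∀ x : ℝ, f x = h (T (hinv x)))
    (μP : MeasureTheory.Measure ℝ) [MeasureTheory.IsProbabilityMeasure μP]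
    (hinvar : MeasureTheory.Measure.map T μP = μP)
    (hsupp : μP (closure {y : ℝ | ∃ n : ℕ, T^[n] 0 = y})ᶜ = 0)
    (hatom : μP {(0 : ℝ)} = 0) :
    ∫⁻ x, ENNReal.ofReal (max 0 (Real.log |deriv f x|)) ∂(MeasureTheory.Measure.map h μP) = ⊤ := by
  obtain rfl : T = tent lam := funext hT
  obtain rfl : c = tentOrbit lam := funext hc
  obtain rfl : f = fun x => h (tent lam (hinv x)) := funext hfdef
  have hF := hasFibonacciRecurrence_of_int_indexed hSm2 hSm1 hSrec hcne hsame hopp hdec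
  have hμ : MeasurePreserving (tent lam) μP μP := ⟨(continuous_tent lam).measurable, hinvar⟩
  have hIcc : ∀ᵐ y ∂μP, y ∈ Icc (-1 : ℝ) 1 :=
    mem_ae_iff.2 (measure_mono_null (compl_subset_compl.2
      (closure_range_tentOrbit_subset (by linarith) hlam2)) hsupp)
  have hh : AEMeasurable h μP := ContinuousOn.aemeasurable_of_ae_mem
    (fun x hx => (hhd x hx).continuousWithinAt) measurableSet_Icc hIcc
  obtain ⟨ε, hε, C, hlocal⟩ := exists_log_abs_deriv_conj_tent_ge hlam1 hlam2 hmono hbij hhd hC1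
    ⟨hinvl, hinvr⟩ h'ne hδ hnfp hnfm
  have hbound : ∀ᵐ y ∂μP, -Real.log |y| ≤
      (min αp αm)⁻¹ * max 0 (Real.log |deriv (fun x => h (tent lam (hinv x))) (h y)|) +
        max (C / min αp αm) (-Real.log ε) := by
    filter_upwards [measure_eq_zero_iff_ae_notMem.1 hatom] with y hy
    exact neg_log_abs_le_of_forall_abs_lt (lt_min hαp hαm) hε hlocal hy
  rw [lintegral_map' (by fun_prop) hh]
  exact lintegral_ofReal_eq_top_of_le (hF.lintegral_neg_log_abs_eq_top hlam1 hμ hsupp hatom)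
    (inv_nonneg.2 (lt_min hαp hαm).le) hbound

theorem positive_part_log_deriv_not_integrable
    (lam : ℝ) (hlam1 : 1 < lam) (hlam2 : lam ≤ 2)
    (T : ℝ → ℝ) (hT : ∀ x : ℝ, T x = lam * (1 - |x|) - 1)
    (c : ℕ → ℝ) (hc : ∀ i : ℕ, c i = T^[i] 0)
    (S : ℤ → ℕ) (hSm2 : S (-2) = 0) (hSm1 : S (-1) = 1)
    (hSrec : ∀ k : ℤ, 0 ≤ k → S k = S (k - 1) + S (k - 2))
    (hcne : ∀ j : ℕ, 1 ≤ j → c j ≠ 0)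
    (hc2neg : c 2 < 0) (hc1pos : 0 < c 1)
    (hsame : ∀ k : ℤ, 2 ≤ k → ∀ j : ℕ, 1 ≤ j → j < S (k - 2) →
      (0 < c (S (k - 1) + j) ↔ 0 < c j))
    (hopp : ∀ k : ℤ, 2 ≤ k → (0 < c (S k) ↔ c (S (k - 2)) < 0))
    (hdec : ∀ k : ℤ, 0 ≤ k → |c (S (k + 1))| < |c (S k)|)
    (hc34 : |c 3| < |c 4|)
    (h : ℝ → ℝ) (h' : ℝ → ℝ) (hinv : ℝ → ℝ)
    (hmono : StrictMonoOn h (Set.Icc (-1 : ℝ) 1))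
    (hbij : Set.BijOn h (Set.Icc (-1 : ℝ) 1) (Set.Icc (-1 : ℝ) 1))
    (hhd : ∀ x ∈ Set.Icc (-1 : ℝ) 1, HasDerivWithinAt h (h' x) (Set.Icc (-1 : ℝ) 1) x)
    (hC1 : ContinuousOn h' (Set.Icc (-1 : ℝ) 1))
    (hinvl : ∀ x ∈ Set.Icc (-1 : ℝ) 1, hinv (h x) = x)
    (hinvr : ∀ y ∈ Set.Icc (-1 : ℝ) 1, h (hinv y) = y)
    (h'ne : ∀ x ∈ Set.Icc (-1 : ℝ) 1, x ≠ 0 → h' x ≠ 0)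
    (h'0 : h' 0 = 0)
    (αp αm M δ : ℝ) (hαp : 0 < αp) (hαm : 0 < αm) (hM : 0 < M)
    (hδ : 0 < δ) (hδ1 : δ ≤ 1)
    (hnfp : ∀ x ∈ Set.Ioo (0 : ℝ) δ,
      Real.exp (-M) * x ^ αp ≤ h' x ∧ h' x ≤ Real.exp M * x ^ αp)
    (hnfm : ∀ x ∈ Set.Ioo (-δ) (0 : ℝ),
      Real.exp (-M) * |x| ^ αm ≤ h' x ∧ h' x ≤ Real.exp M * |x| ^ αm)
    (f : ℝ → ℝ) (hfdef : ∀ x : ℝ, f x = h (T (hinv x)))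
    (ct : ℝ) (hct : ct = h 0)
    (μP : MeasureTheory.Measure ℝ) [MeasureTheory.IsProbabilityMeasure μP]
    (hinvar : MeasureTheory.Measure.map T μP = μP)
    (hsupp : μP (closure {y : ℝ | ∃ n : ℕ, T^[n] 0 = y})ᶜ = 0)
    (hatom : μP {(0 : ℝ)} = 0) :
    ∫⁻ x, ENNReal.ofReal (max 0 (Real.log |deriv f x|)) ∂(MeasureTheory.Measure.map h μP) = ⊤ :=
  positive_part_log_deriv_not_integrable_general lam hlam1 hlam2 T hT c hc S hSm2 hSm1 hSrec hcne
    hsame hopp hdec h h' hinv hmono hbij hhd hC1 hinvl hinvr h'ne αp αm M δ hαp hαm hδ hnfp hnfm f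
    hfdef μP hinvar hsupp hatom
end

section
/- There exist positive real numbers Θ, α′, α″ such that for every k ≥ 1: Θ^{−1} λ^{−S(k)·α″} ≤ |f^{S(k)}(c̃) − c̃| ≤ Θ λ^{−S(k)·α′}. -/
open MeasureTheory Filter Set

set_option maxHeartbeats 1000000 in
theorem fibonacci_return_distance_bounds
    (lam : ℝ) (hlam1 : 1 < lam) (hlam2 : lam ≤ 2)
    (T : ℝ → ℝ) (hT : ∀ x : ℝ, T x = lam * (1 - |x|) - 1)
    (c : ℕ → ℝ) (hc : ∀ i : ℕ, c i = T^[i] 0)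
    (S : ℤ → ℕ) (hSm2 : S (-2) = 0) (hSm1 : S (-1) = 1)
    (hSrec : ∀ k : ℤ, 0 ≤ k → S k = S (k - 1) + S (k - 2))
    (hcne : ∀ j : ℕ, 1 ≤ j → c j ≠ 0)
    (hc2neg : c 2 < 0) (hc1pos : 0 < c 1)
    (hsame : ∀ k : ℤ, 2 ≤ k → ∀ j : ℕ, 1 ≤ j → j < S (k - 2) →
      (0 < c (S (k - 1) + j) ↔ 0 < c j))
    (hopp : ∀ k : ℤ, 2 ≤ k → (0 < c (S k) ↔ c (S (k - 2)) < 0))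
    (hdec : ∀ k : ℤ, 0 ≤ k → |c (S (k + 1))| < |c (S k)|)
    (hc34 : |c 3| < |c 4|)
    (h : ℝ → ℝ) (h' : ℝ → ℝ) (hinv : ℝ → ℝ)
    (hmono : StrictMonoOn h (Set.Icc (-1 : ℝ) 1))
    (hbij : Set.BijOn h (Set.Icc (-1 : ℝ) 1) (Set.Icc (-1 : ℝ) 1))
    (hhd : ∀ x ∈ Set.Icc (-1 : ℝ) 1, HasDerivWithinAt h (h' x) (Set.Icc (-1 : ℝ) 1) x)
    (hC1 : ContinuousOn h' (Set.Icc (-1 : ℝ) 1))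
    (hinvl : ∀ x ∈ Set.Icc (-1 : ℝ) 1, hinv (h x) = x)
    (hinvr : ∀ y ∈ Set.Icc (-1 : ℝ) 1, h (hinv y) = y)
    (h'ne : ∀ x ∈ Set.Icc (-1 : ℝ) 1, x ≠ 0 → h' x ≠ 0)
    (h'0 : h' 0 = 0)
    (αp αm M δ : ℝ) (hαp : 0 < αp) (hαm : 0 < αm) (hM : 0 < M)
    (hδ : 0 < δ) (hδ1 : δ ≤ 1)
    (hnfp : ∀ x ∈ Set.Ioo (0 : ℝ) δ,
      Real.exp (-M) * x ^ αp ≤ h' x ∧ h' x ≤ Real.exp M * x ^ αp)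
    (hnfm : ∀ x ∈ Set.Ioo (-δ) (0 : ℝ),
      Real.exp (-M) * |x| ^ αm ≤ h' x ∧ h' x ≤ Real.exp M * |x| ^ αm)
    (f : ℝ → ℝ) (hfdef : ∀ x : ℝ, f x = h (T (hinv x)))
    (ct : ℝ) (hct : ct = h 0) :
    ∃ Θ α' α'' : ℝ, 0 < Θ ∧ 0 < α' ∧ 0 < α'' ∧
      ∀ k : ℤ, 1 ≤ k →
        Θ⁻¹ * lam ^ (-(S k : ℝ) * α'') ≤ |f^[S k] ct - ct| ∧
        |f^[S k] ct - ct| ≤ Θ * lam ^ (-(S k : ℝ) * α') := by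
  have hlam0 : (0:ℝ) < lam := lt_trans one_pos hlam1
  -- basic orbit facts
  have hc0 : c 0 = 0 := by rw [hc]; simp
  have hiter : ∀ n : ℕ, c (n+1) = T (c n) := by
    intro n; rw [hc, hc, Function.iterate_succ_apply']
  have hc1v : c 1 = lam - 1 := by
    rw [hiter 0, hc0, hT]; simp
  have hcb : ∀ n : ℕ, c n ∈ Set.Icc (-1:ℝ) 1 := by
    intro n
    induction n with
    | zero => rw [hc0]; constructor <;> norm_num
    | succ n ih =>
      rw [hiter n, hT]
      obtain ⟨h1, h2⟩ := ih
      have ha0 : 0 ≤ |c n| := abs_nonneg _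
      have ha1 : |c n| ≤ 1 := abs_le.mpr ⟨h1, h2⟩
      constructor
      · nlinarith
      · nlinarith
  have habs1 : ∀ n : ℕ, |c n| ≤ 1 := fun n => abs_le.mpr ⟨(hcb n).1, (hcb n).2⟩
  -- S facts
  have hS0 : S 0 = 1 := by
    have := hSrec 0 le_rfl; simp at this; rw [this]; norm_num [hSm1, hSm2]
  have hS1 : S 1 = 2 := by
    have := hSrec 1 (by norm_num); simp at this
    rw [this]; norm_num [hS0, hSm1]
  have hSpos : ∀ k : ℤ, -1 ≤ k → 1 ≤ S k := by
    have aux : ∀ n : ℕ, 1 ≤ S ((n:ℤ) - 1) ∧ 1 ≤ S (n:ℤ) := by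
      intro n
      induction n with
      | zero => simp [hSm1, hS0]
      | succ n ih =>
        have hr := hSrec ((n:ℤ)+1) (by positivity)
        have e1 : ((n:ℤ)+1) - 1 = (n:ℤ) := by ring
        have e2 : ((n:ℤ)+1) - 2 = (n:ℤ) - 1 := by ring
        rw [e1, e2] at hr
        constructor
        · push_cast; rw [e1]; exact ih.2
        · push_cast; rw [hr]; omega
    intro k hk
    obtain ⟨n, rfl⟩ : ∃ n : ℕ, k = (n:ℤ) - 1 := ⟨(k+1).toNat, by omega⟩
    exact (aux _).1
  have hSnn : ∀ k : ℤ, -2 ≤ k → 0 ≤ S k := fun _ _ => Nat.zero_le _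
  have hSmono : ∀ k : ℤ, 0 ≤ k → S (k-1) ≤ S k := by
    intro k hk; rw [hSrec k hk]; omega
  have hS2 : ∀ k : ℤ, 1 ≤ k → S k ≤ 2 * S (k-1) := by
    intro k hk
    have h1 := hSrec k (by omega)
    have h2 := hSmono (k-1) (by omega)
    have e : k - 1 - 1 = k - 2 := by ring
    rw [e] at h2; omega
  -- key identity
  have hkey : ∀ k : ℤ, 2 ≤ k →
      |c (S k)| + |c (S (k-2))| = lam ^ (S (k-2)) * |c (S (k-1))| := by
    intro k hk
    set n := S (k-1) with hn
    set mm := S (k-2) with hmm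
    have hn1 : 1 ≤ n := hSpos (k-1) (by omega)
    have hmm1 : 1 ≤ mm := hSpos (k-2) (by omega)
    -- linearity along the orbit
    have hlin : ∀ j : ℕ, j ≤ mm → |c (n + j) - c j| = lam ^ j * |c n| := by
      intro j
      induction j with
      | zero => intro _; simp [hc0]
      | succ j ih =>
        intro hj
        have hj' : j < mm := by omega
        have hprev := ih (by omega)
        -- same (weak) side
        have hside : (0 ≤ c (n + j) ∧ 0 ≤ c j) ∨ (c (n + j) ≤ 0 ∧ c j ≤ 0) := by
          rcases Nat.eq_zero_or_pos j with rfl | hjpos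
          · rw [hc0]
            rcases le_total 0 (c (n + 0)) with hle | hle
            · exact Or.inl ⟨hle, le_rfl⟩
            · exact Or.inr ⟨hle, le_rfl⟩
          · have hiff := hsame k hk j hjpos hj'
            have hne1 : c (n + j) ≠ 0 := hcne _ (by omega)
            have hne2 : c j ≠ 0 := hcne _ (by omega)
            rcases lt_or_gt_of_ne hne2 with hneg | hpos
            · refine Or.inr ⟨?_, le_of_lt hneg⟩
              by_contra hcon
              push_neg at hcon
              have : 0 < c (n + j) := lt_of_le_of_ne (le_of_lt hcon) (Ne.symm hne1)
              exact absurd (hiff.mp this) (not_lt.mpr (le_of_lt hneg))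
            · exact Or.inl ⟨le_of_lt (hiff.mpr hpos), le_of_lt hpos⟩
        have e1 : n + (j+1) = (n + j) + 1 := by ring
        rw [e1, hiter (n+j), hiter j, hT, hT]
        have habs : |c (n+j)| - |c j| = c (n+j) - c j ∨ |c (n+j)| - |c j| = -(c (n+j) - c j) := by
          rcases hside with ⟨h1, h2⟩ | ⟨h1, h2⟩
          · left; rw [abs_of_nonneg h1, abs_of_nonneg h2]
          · right; rw [abs_of_nonpos h1, abs_of_nonpos h2]; ring
        have key : |lam * (1 - |c (n+j)|) - 1 - (lam * (1 - |c j|) - 1)| = lam * |c (n+j) - c j| := by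
          have e2 : lam * (1 - |c (n+j)|) - 1 - (lam * (1 - |c j|) - 1) = -(lam * (|c (n+j)| - |c j|)) := by ring
          rw [e2, abs_neg, abs_mul, abs_of_pos hlam0]
          rcases habs with he | he
          · rw [he]
          · rw [he, abs_neg]
        rw [key, hprev, pow_succ]
        ring
    have hsum : S k = n + mm := by
      rw [hSrec k (by omega)]
    have hfin := hlin mm le_rfl
    rw [← hsum] at hfin
    -- opposite sides
    have hne1 : c (S k) ≠ 0 := hcne _ (hSpos k (by omega))
    have hne2 : c (S (k-2)) ≠ 0 := hcne _ hmm1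
    have hio := hopp k hk
    rcases lt_or_gt_of_ne hne1 with hneg | hpos
    · have h2 : ¬ (c mm < 0) := fun hcon => absurd (hio.mpr hcon) (not_lt.mpr (le_of_lt hneg))
      have h2' : 0 < c mm := lt_of_le_of_ne (not_lt.mp h2) (Ne.symm hne2)
      rw [← hfin]
      rw [abs_of_neg hneg, abs_of_pos h2', abs_of_nonpos (by linarith : c (S k) - c mm ≤ 0)]
      ring
    · have h2 : c mm < 0 := hio.mp hpos
      rw [← hfin]
      rw [abs_of_pos hpos, abs_of_neg h2, abs_of_nonneg (by linarith : 0 ≤ c (S k) - c mm)]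
      ring
  -- step bounds
  have hstep_low : ∀ k : ℤ, 1 ≤ k → |c (S (k-1))| ≤ lam ^ (S (k-1)) * |c (S k)| := by
    intro k hk
    have hid := hkey (k+1) (by omega)
    have e1 : (k+1) - 2 = k - 1 := by ring
    have e2 : (k+1) - 1 = k := by ring
    rw [e1, e2] at hid
    nlinarith [abs_nonneg (c (S (k+1)))]
  have hstep_up : ∀ k : ℤ, 1 ≤ k → lam ^ (S (k-1)) * |c (S k)| ≤ 2 * |c (S (k-1))| := by
    intro k hk
    have hid := hkey (k+1) (by omega)
    have e1 : (k+1) - 2 = k - 1 := by ring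
    have e2 : (k+1) - 1 = k := by ring
    rw [e1, e2] at hid
    have hd1 := hdec k (by omega)
    have hd2 := hdec (k-1) (by omega)
    have e3 : k - 1 + 1 = k := by ring
    rw [e3] at hd2
    nlinarith
  -- telescoped lower bound (rpow)
  have hdpos : ∀ k : ℤ, -1 ≤ k → 0 < |c (S k)| := by
    intro k hk
    exact abs_pos.mpr (hcne _ (hSpos k hk))
  have hrpow_nat : ∀ n : ℕ, (lam : ℝ) ^ (n : ℝ) = lam ^ n := fun n => Real.rpow_natCast lam n
  have hlow : ∀ k : ℤ, 0 ≤ k →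
      (lam - 1) * lam ^ ((2:ℝ) - (S (k+1) : ℝ)) ≤ |c (S k)| := by
    refine Int.le_induction ?_ ?_
    · have e : S ((0:ℤ)+1) = 2 := by norm_num [hS1]
      have e2 : ((2:ℝ) - ((2:ℕ):ℝ)) = 0 := by norm_num
      rw [e, hS0, hc1v, e2, Real.rpow_zero, mul_one, abs_of_pos (by linarith : (0:ℝ) < lam - 1)]
    · intro k hk ih'
      have hsl := hstep_low (k+1) (by omega)
      have e1 : (k+1) - 1 = k := by ring
      rw [e1] at hsl
      have hrec : (S (k+1+1) : ℝ) = S (k+1) + S k := by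
        have h5 := hSrec (k+2) (by omega)
        have e2 : (k+2) - 1 = k + 1 := by ring
        have e3 : (k+2) - 2 = k := by ring
        rw [e2, e3] at h5
        have e4 : k+1+1 = k+2 := by ring
        rw [e4]
        exact_mod_cast congrArg (Nat.cast : ℕ → ℝ) h5
      have hpowpos : (0:ℝ) < lam ^ (S k) := pow_pos hlam0 _
      have step : lam ^ (-(S k : ℝ)) * |c (S k)| ≤ |c (S (k+1))| := by
        rw [Real.rpow_neg (le_of_lt hlam0), hrpow_nat]
        rw [inv_mul_le_iff₀ hpowpos]
        linarith [hsl]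
      calc (lam - 1) * lam ^ ((2:ℝ) - (S (k+1+1) : ℝ))
          = lam ^ (-(S k : ℝ)) * ((lam - 1) * lam ^ ((2:ℝ) - (S (k+1) : ℝ))) := by
            rw [show ((2:ℝ) - (S (k+1+1):ℝ)) = (-(S k:ℝ)) + ((2:ℝ) - (S (k+1):ℝ)) from by rw [hrec]; ring,
                Real.rpow_add hlam0]
            ring
        _ ≤ lam ^ (-(S k : ℝ)) * |c (S k)| := by
            have hpp : (0:ℝ) < lam ^ (-(S k : ℝ)) := Real.rpow_pos_of_pos hlam0 _
            exact mul_le_mul_of_nonneg_left ih' (le_of_lt hpp)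
        _ ≤ |c (S (k+1))| := step
  have hup : ∀ k : ℤ, 1 ≤ k → |c (S k)| ≤ 2 * lam ^ (-(S k : ℝ)/2) := by
    intro k hk
    have hsu := hstep_up k hk
    have hpowpos : (0:ℝ) < lam ^ (S (k-1)) := pow_pos hlam0 _
    have h1 : |c (S k)| ≤ 2 * lam ^ (-(S (k-1) : ℝ)) := by
      rw [Real.rpow_neg (le_of_lt hlam0), hrpow_nat]
      rw [← div_eq_mul_inv, le_div_iff₀ hpowpos]
      have hle1 := habs1 (S (k-1))
      calc |c (S k)| * lam ^ S (k-1) = lam ^ S (k-1) * |c (S k)| := by ring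
        _ ≤ 2 * |c (S (k-1))| := hsu
        _ ≤ 2 * 1 := by linarith
        _ = 2 := by norm_num
    have h2 : lam ^ (-(S (k-1) : ℝ)) ≤ lam ^ (-(S k : ℝ)/2) := by
      apply Real.rpow_le_rpow_of_exponent_le (le_of_lt hlam1)
      have := hS2 k hk
      have : (S k : ℝ) ≤ 2 * (S (k-1) : ℝ) := by exact_mod_cast this
      linarith
    linarith [mul_le_mul_of_nonneg_left h2 (by norm_num : (0:ℝ) ≤ 2)]
  -- conjugacy
  have hconj : ∀ n : ℕ, f^[n] ct = h (c n) := by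
    intro n
    induction n with
    | zero => simp [hct, hc0]
    | succ n ih =>
      rw [Function.iterate_succ_apply', ih, hfdef, hinvl _ (hcb n), ← hiter n]
  -- global h bounds
  set β : ℝ := min αp αm + 1 with hβdef
  set B : ℝ := max αp αm + 1 with hBdef
  have hβ0 : 0 < β := by have := lt_min hαp hαm; simp only [hβdef]; linarith
  have hB0 : 0 < B := by have := le_max_left αp αm; simp only [hBdef]; linarith
  set C : ℝ := Real.exp M + 2 * δ ^ (-β) with hCdef
  have hC0 : 0 < C := by positivity
  have h0mem : (0:ℝ) ∈ Set.Icc (-1:ℝ) 1 := by norm_num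
  have hcont : ContinuousOn h (Set.Icc (-1:ℝ) 1) := fun t ht => (hhd t ht).continuousWithinAt
  have mvt : ∀ a b K : ℝ, a ≤ b → Set.Icc a b ⊆ Set.Icc (-1:ℝ) 1 →
      (∀ t ∈ Set.Icc a b, ‖h' t‖ ≤ K) → |h b - h a| ≤ K * |b - a| := by
    intro a b K hab hsub hbd
    have := Convex.norm_image_sub_le_of_norm_hasDerivWithin_le
      (fun t ht => (hhd t (hsub ht)).mono hsub) hbd (convex_Icc a b)
      (Set.left_mem_Icc.mpr hab) (Set.right_mem_Icc.mpr hab)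
    simpa [Real.norm_eq_abs] using this
  have monhelp : ∀ a b K : ℝ, a < b → Set.Icc a b ⊆ Set.Icc (-1:ℝ) 1 →
      (∀ t ∈ Set.Ioo a b, K ≤ h' t) → K * (b - a) ≤ h b - h a := by
    intro a b K hab hsub hbd
    have hg : MonotoneOn (fun t => h t - K * t) (Set.Icc a b) := by
      apply monotoneOn_of_hasDerivWithinAt_nonneg (f' := fun t => h' t - K) (convex_Icc a b)
      · exact (hcont.mono hsub).sub (continuous_const.mul continuous_id).continuousOn
      · intro t ht
        rw [interior_Icc] at ht ⊢
        have htI : t ∈ Set.Icc a b := Set.Ioo_subset_Icc_self ht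
        have hd1 : HasDerivWithinAt h (h' t) (Set.Ioo a b) t :=
          (hhd t (hsub htI)).mono ((Set.Ioo_subset_Icc_self).trans hsub)
        have hd2 : HasDerivAt (fun u : ℝ => K * u) K t := by
          simpa using (hasDerivAt_id t).const_mul K
        exact hd1.sub hd2.hasDerivWithinAt
      · intro t ht
        rw [interior_Icc] at ht
        have := hbd t ht
        linarith
    have hres := hg (Set.left_mem_Icc.mpr hab.le) (Set.right_mem_Icc.mpr hab.le) hab.le
    dsimp at hres
    linarith
  have hβle_p : β ≤ αp + 1 := by
    have := min_le_left αp αm; simp only [hβdef]; linarith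
  have hβle_m : β ≤ αm + 1 := by
    have := min_le_right αp αm; simp only [hβdef]; linarith
  have hBge_p : αp + 1 ≤ B := by
    have := le_max_left αp αm; simp only [hBdef]; linarith
  have hBge_m : αm + 1 ≤ B := by
    have := le_max_right αp αm; simp only [hBdef]; linarith
  have hHup : ∀ x ∈ Set.Icc (-1:ℝ) 1, |h x - h 0| ≤ C * |x| ^ β := by
    intro x hx
    have hximg := hbij.mapsTo hx
    have h0img := hbij.mapsTo h0mem
    have hexpC : Real.exp M ≤ C := by
      rw [hCdef]
      have : (0:ℝ) < 2 * δ ^ (-β) := by positivity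
      linarith
    have habsx1 : |x| ≤ 1 := abs_le.mpr ⟨hx.1, hx.2⟩
    rcases le_or_gt δ |x| with hcase | hcase
    · have h2b : |h x - h 0| ≤ 2 :=
        abs_le.mpr ⟨by linarith [hximg.1, h0img.2], by linarith [hximg.2, h0img.1]⟩
      have hδx : δ ^ β ≤ |x| ^ β := Real.rpow_le_rpow (le_of_lt hδ) hcase (le_of_lt hβ0)
      have hinvid : δ ^ (-β) * δ ^ β = 1 := by
        rw [← Real.rpow_add hδ]; simp
      have hδnegpos : (0:ℝ) < δ ^ (-β) := Real.rpow_pos_of_pos hδ _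
      calc |h x - h 0| ≤ 2 := h2b
        _ = 2 * (δ ^ (-β) * δ ^ β) := by rw [hinvid]; ring
        _ ≤ 2 * (δ ^ (-β) * |x| ^ β) := by
            have := mul_le_mul_of_nonneg_left hδx hδnegpos.le
            linarith
        _ ≤ C * |x| ^ β := by
            rw [hCdef]
            have hxβ : 0 ≤ |x| ^ β := Real.rpow_nonneg (abs_nonneg x) _
            have e : (Real.exp M + 2 * δ ^ (-β)) * |x| ^ β
                = Real.exp M * |x| ^ β + 2 * (δ ^ (-β) * |x| ^ β) := by ring
            rw [e]
            have := mul_nonneg (Real.exp_pos M).le hxβ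
            linarith
    · rcases lt_trichotomy x 0 with hxneg | hx0 | hxpos
      · have hxgt : -δ < x := by
          rw [abs_of_neg hxneg] at hcase; linarith
        have hbd : ∀ t ∈ Set.Icc x (0:ℝ), ‖h' t‖ ≤ Real.exp M * |x| ^ αm := by
          intro t ht
          rcases eq_or_lt_of_le ht.2 with heq | hlt
          · rw [heq, h'0]
            simp only [norm_zero]
            positivity
          · have htm : t ∈ Set.Ioo (-δ) (0:ℝ) := ⟨lt_of_lt_of_le hxgt ht.1, hlt⟩
            obtain ⟨hl, hu⟩ := hnfm t htm
            have h'nn : 0 ≤ h' t := le_trans (by positivity) hl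
            rw [Real.norm_eq_abs, abs_of_nonneg h'nn]
            have htx : |t| ^ αm ≤ |x| ^ αm := by
              apply Real.rpow_le_rpow (abs_nonneg t) _ (le_of_lt hαm)
              rw [abs_of_neg hxneg, abs_of_neg hlt]
              linarith [ht.1]
            exact hu.trans (mul_le_mul_of_nonneg_left htx (Real.exp_pos M).le)
        have hmvt := mvt x 0 _ (le_of_lt hxneg)
          (Set.Icc_subset_Icc (hx.1) (by norm_num)) hbd
        rw [abs_sub_comm (h 0), zero_sub, abs_neg] at hmvt
        have e1 : Real.exp M * |x| ^ αm * |x| = Real.exp M * |x| ^ (αm + 1) := by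
          rw [Real.rpow_add_one (abs_ne_zero.mpr (ne_of_lt hxneg))]
          ring
        have e2 : |x| ^ (αm + 1) ≤ |x| ^ β :=
          Real.rpow_le_rpow_of_exponent_ge (abs_pos.mpr (ne_of_lt hxneg)) habsx1 hβle_m
        have hxβ : 0 ≤ |x| ^ β := Real.rpow_nonneg (abs_nonneg x) _
        calc |h x - h 0| ≤ Real.exp M * |x| ^ αm * |x| := hmvt
          _ = Real.exp M * |x| ^ (αm + 1) := e1
          _ ≤ Real.exp M * |x| ^ β := mul_le_mul_of_nonneg_left e2 (Real.exp_pos M).le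
          _ ≤ C * |x| ^ β := mul_le_mul_of_nonneg_right hexpC hxβ
      · subst hx0
        simp [Real.zero_rpow (ne_of_gt hβ0)]
      · have hbd : ∀ t ∈ Set.Icc (0:ℝ) x, ‖h' t‖ ≤ Real.exp M * |x| ^ αp := by
          intro t ht
          rcases eq_or_lt_of_le ht.1 with heq | hlt
          · rw [← heq, h'0]
            simp only [norm_zero]
            positivity
          · have htm : t ∈ Set.Ioo (0:ℝ) δ := ⟨hlt, lt_of_le_of_lt ht.2 (by rwa [abs_of_pos hxpos] at hcase)⟩
            obtain ⟨hl, hu⟩ := hnfp t htm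
            have h'nn : 0 ≤ h' t := le_trans (by positivity) hl
            rw [Real.norm_eq_abs, abs_of_nonneg h'nn]
            have htx : t ^ αp ≤ |x| ^ αp := by
              apply Real.rpow_le_rpow (le_of_lt hlt) _ (le_of_lt hαp)
              rw [abs_of_pos hxpos]
              exact ht.2
            exact hu.trans (mul_le_mul_of_nonneg_left htx (Real.exp_pos M).le)
        have hmvt := mvt 0 x _ (le_of_lt hxpos)
          (Set.Icc_subset_Icc (by norm_num) hx.2) hbd
        rw [sub_zero] at hmvt
        have e1 : Real.exp M * |x| ^ αp * |x| = Real.exp M * |x| ^ (αp + 1) := by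
          rw [Real.rpow_add_one (abs_ne_zero.mpr (ne_of_gt hxpos))]
          ring
        have e2 : |x| ^ (αp + 1) ≤ |x| ^ β :=
          Real.rpow_le_rpow_of_exponent_ge (abs_pos.mpr (ne_of_gt hxpos)) habsx1 hβle_p
        have hxβ : 0 ≤ |x| ^ β := Real.rpow_nonneg (abs_nonneg x) _
        calc |h x - h 0| ≤ Real.exp M * |x| ^ αp * |x| := hmvt
          _ = Real.exp M * |x| ^ (αp + 1) := e1
          _ ≤ Real.exp M * |x| ^ β := mul_le_mul_of_nonneg_left e2 (Real.exp_pos M).le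
          _ ≤ C * |x| ^ β := mul_le_mul_of_nonneg_right hexpC hxβ
  set m : ℝ := min (h δ - h 0) (h 0 - h (-δ)) with hmdef
  have hm0 : 0 < m := by
    have hδm : δ ∈ Set.Icc (-1:ℝ) 1 := ⟨by linarith, hδ1⟩
    have hδm' : -δ ∈ Set.Icc (-1:ℝ) 1 := ⟨by linarith, by linarith⟩
    have h0m : (0:ℝ) ∈ Set.Icc (-1:ℝ) 1 := ⟨by norm_num, by norm_num⟩
    have h1 := hmono h0m hδm hδ
    have h2 := hmono hδm' h0m (by linarith)
    simp only [hmdef, lt_min_iff]; constructor <;> linarith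
  set cl : ℝ := min (Real.exp (-M) * (2:ℝ) ^ (-B)) m with hcldef
  have hcl0 : 0 < cl := by
    have : (0:ℝ) < Real.exp (-M) * (2:ℝ) ^ (-B) := by positivity
    simp only [hcldef, lt_min_iff]; exact ⟨this, hm0⟩
  have hHlow : ∀ x ∈ Set.Icc (-1:ℝ) 1, x ≠ 0 → cl * |x| ^ B ≤ |h x - h 0| := by
    intro x hx hxne
    have habsx1 : |x| ≤ 1 := abs_le.mpr ⟨hx.1, hx.2⟩
    have hxBle1 : |x| ^ B ≤ 1 := Real.rpow_le_one (abs_nonneg x) habsx1 hB0.le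
    have hxBnn : 0 ≤ |x| ^ B := Real.rpow_nonneg (abs_nonneg x) _
    have hclm : cl ≤ m := by rw [hcldef]; exact min_le_right _ _
    have hcle : cl ≤ Real.exp (-M) * (2:ℝ) ^ (-B) := by rw [hcldef]; exact min_le_left _ _
    rcases le_or_gt δ |x| with hcase | hcase
    · -- far from 0
      rcases lt_or_gt_of_ne hxne with hxneg | hxpos
      · have hxle : x ≤ -δ := by rw [abs_of_neg hxneg] at hcase; linarith
        have hδmem : -δ ∈ Set.Icc (-1:ℝ) 1 := ⟨by linarith, by linarith⟩
        have hh1 : h x ≤ h (-δ) := by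
          rcases eq_or_lt_of_le hxle with heq | hlt
          · rw [heq]
          · exact le_of_lt (hmono hx hδmem hlt)
        have hmle : m ≤ h 0 - h (-δ) := by rw [hmdef]; exact min_le_right _ _
        have : cl * |x| ^ B ≤ h 0 - h x := by
          calc cl * |x| ^ B ≤ cl * 1 := mul_le_mul_of_nonneg_left hxBle1 hcl0.le
            _ = cl := mul_one cl
            _ ≤ h 0 - h x := by linarith
        calc cl * |x| ^ B ≤ h 0 - h x := this
          _ ≤ |h 0 - h x| := le_abs_self _
          _ = |h x - h 0| := abs_sub_comm _ _
      · have hxge : δ ≤ x := by rw [abs_of_pos hxpos] at hcase; exact hcase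
        have hδmem : δ ∈ Set.Icc (-1:ℝ) 1 := ⟨by linarith, hδ1⟩
        have hh1 : h δ ≤ h x := by
          rcases eq_or_lt_of_le hxge with heq | hlt
          · rw [heq]
          · exact le_of_lt (hmono hδmem hx hlt)
        have hmle : m ≤ h δ - h 0 := by rw [hmdef]; exact min_le_left _ _
        calc cl * |x| ^ B ≤ cl * 1 := mul_le_mul_of_nonneg_left hxBle1 hcl0.le
          _ = cl := mul_one cl
          _ ≤ h x - h 0 := by linarith
          _ ≤ |h x - h 0| := le_abs_self _
    · -- close to 0
      rcases lt_or_gt_of_ne hxne with hxneg | hxpos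
      · -- negative side
        have hxgt : -δ < x := by rw [abs_of_neg hxneg] at hcase; linarith
        set K : ℝ := Real.exp (-M) * ((-x)/2) ^ αm with hKdef
        have hnx0 : (0:ℝ) < -x := by linarith
        have hbd : ∀ t ∈ Set.Ioo x (x/2), K ≤ h' t := by
          intro t ht
          have htm : t ∈ Set.Ioo (-δ) (0:ℝ) := ⟨lt_trans hxgt ht.1, by linarith [ht.2]⟩
          obtain ⟨hl, _⟩ := hnfm t htm
          have htabs : ((-x)/2 : ℝ) ≤ |t| := by
            rw [abs_of_neg htm.2]
            linarith [ht.2]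
          have hcmp : ((-x)/2 : ℝ) ^ αm ≤ |t| ^ αm :=
            Real.rpow_le_rpow (by positivity) htabs hαm.le
          calc K ≤ Real.exp (-M) * |t| ^ αm :=
              mul_le_mul_of_nonneg_left hcmp (Real.exp_pos _).le
            _ ≤ h' t := hl
        have hmon := monhelp x (x/2) K (by linarith)
          (Set.Icc_subset_Icc hx.1 (by linarith [hx.2])) hbd
        have hhalfmem : x/2 ∈ Set.Icc (-1:ℝ) 1 := ⟨by linarith [hx.1], by linarith [hx.2]⟩
        have hh2 : h (x/2) ≤ h 0 := le_of_lt (hmono hhalfmem h0mem (by linarith))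
        have e0 : K * (x/2 - x) = K * ((-x)/2) := by ring
        rw [e0] at hmon
        have e1 : K * ((-x)/2) = Real.exp (-M) * ((-x)/2) ^ (αm + 1) := by
          rw [hKdef, Real.rpow_add_one (by positivity : ((-x)/2 : ℝ) ≠ 0)]
          ring
        have e2 : ((-x)/2) ^ B ≤ ((-x)/2) ^ (αm + 1) :=
          Real.rpow_le_rpow_of_exponent_ge (by positivity) (by linarith [hx.1]) hBge_m
        have e3 : ((-x)/2 : ℝ) ^ B = (-x) ^ B * (2:ℝ) ^ (-B) := by
          rw [Real.div_rpow hnx0.le (by norm_num : (0:ℝ) ≤ 2), Real.rpow_neg (by norm_num : (0:ℝ) ≤ 2)]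
          ring
        have habseq : |x| = -x := abs_of_neg hxneg
        have hnxB : (0:ℝ) ≤ (-x) ^ B := Real.rpow_nonneg hnx0.le _
        calc cl * |x| ^ B = cl * (-x) ^ B := by rw [habseq]
          _ ≤ (Real.exp (-M) * (2:ℝ) ^ (-B)) * (-x) ^ B := mul_le_mul_of_nonneg_right hcle hnxB
          _ = Real.exp (-M) * ((-x)/2) ^ B := by rw [e3]; ring
          _ ≤ Real.exp (-M) * ((-x)/2) ^ (αm + 1) :=
              mul_le_mul_of_nonneg_left e2 (Real.exp_pos _).le
          _ = K * ((-x)/2) := e1.symm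
          _ ≤ h (x/2) - h x := hmon
          _ ≤ h 0 - h x := by linarith
          _ ≤ |h 0 - h x| := le_abs_self _
          _ = |h x - h 0| := abs_sub_comm _ _
      · -- positive side
        have hxlt : x < δ := by rw [abs_of_pos hxpos] at hcase; exact hcase
        set K : ℝ := Real.exp (-M) * (x/2) ^ αp with hKdef
        have hbd : ∀ t ∈ Set.Ioo (x/2) x, K ≤ h' t := by
          intro t ht
          have htm : t ∈ Set.Ioo (0:ℝ) δ := ⟨by linarith [ht.1], lt_trans ht.2 hxlt⟩
          obtain ⟨hl, _⟩ := hnfp t htm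
          have hcmp : (x/2 : ℝ) ^ αp ≤ t ^ αp :=
            Real.rpow_le_rpow (by positivity) (le_of_lt ht.1) hαp.le
          calc K ≤ Real.exp (-M) * t ^ αp :=
              mul_le_mul_of_nonneg_left hcmp (Real.exp_pos _).le
            _ ≤ h' t := hl
        have hmon := monhelp (x/2) x K (by linarith)
          (Set.Icc_subset_Icc (by linarith [hx.1]) hx.2) hbd
        have hhalfmem : x/2 ∈ Set.Icc (-1:ℝ) 1 := ⟨by linarith [hx.1], by linarith [hx.2]⟩
        have hh2 : h 0 ≤ h (x/2) := le_of_lt (hmono h0mem hhalfmem (by linarith))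
        have e0 : K * (x - x/2) = K * (x/2) := by ring
        rw [e0] at hmon
        have e1 : K * (x/2) = Real.exp (-M) * (x/2) ^ (αp + 1) := by
          rw [hKdef, Real.rpow_add_one (by positivity : (x/2 : ℝ) ≠ 0)]
          ring
        have e2 : (x/2) ^ B ≤ (x/2) ^ (αp + 1) :=
          Real.rpow_le_rpow_of_exponent_ge (by positivity) (by linarith [hx.2]) hBge_p
        have e3 : (x/2 : ℝ) ^ B = x ^ B * (2:ℝ) ^ (-B) := by
          rw [Real.div_rpow hxpos.le (by norm_num : (0:ℝ) ≤ 2), Real.rpow_neg (by norm_num : (0:ℝ) ≤ 2)]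
          ring
        have habseq : |x| = x := abs_of_pos hxpos
        have hxB : (0:ℝ) ≤ x ^ B := Real.rpow_nonneg hxpos.le _
        calc cl * |x| ^ B = cl * x ^ B := by rw [habseq]
          _ ≤ (Real.exp (-M) * (2:ℝ) ^ (-B)) * x ^ B := mul_le_mul_of_nonneg_right hcle hxB
          _ = Real.exp (-M) * (x/2) ^ B := by rw [e3]; ring
          _ ≤ Real.exp (-M) * (x/2) ^ (αp + 1) :=
              mul_le_mul_of_nonneg_left e2 (Real.exp_pos _).le
          _ = K * (x/2) := e1.symm
          _ ≤ h x - h (x/2) := hmon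
          _ ≤ h x - h 0 := by linarith
          _ ≤ |h x - h 0| := le_abs_self _
  -- assemble
  refine ⟨max (C * (2:ℝ) ^ β) ((cl * (lam - 1) ^ B)⁻¹), β/2, 2*B, ?_, by positivity, by positivity, ?_⟩
  · have : (0:ℝ) < C * (2:ℝ) ^ β := by positivity
    exact lt_max_of_lt_left this
  intro k hk
  set x := c (S k) with hxdef
  have hxmem := hcb (S k)
  have hxne : x ≠ 0 := hcne (S k) (hSpos k (by omega))
  have hdist : f^[S k] ct - ct = h x - h 0 := by rw [hconj (S k), hct]
  have hlam1' : (0:ℝ) < lam - 1 := by linarith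
  have hΘpos : (0:ℝ) < max (C * (2:ℝ) ^ β) ((cl * (lam - 1) ^ B)⁻¹) :=
    lt_max_of_lt_left (by positivity)
  constructor
  · -- lower bound
    have hHl := hHlow x hxmem hxne
    have hxlow := hlow k (by omega)
    have hexp1 : lam ^ ((2:ℝ) - (S (k+1) : ℝ)) ≥ lam ^ ((-2:ℝ) * (S k : ℝ)) := by
      apply Real.rpow_le_rpow_of_exponent_le hlam1.le
      have h2 := hS2 (k+1) (by omega)
      have e : (k+1) - 1 = k := by ring
      rw [e] at h2
      have : (S (k+1) : ℝ) ≤ 2 * (S k : ℝ) := by exact_mod_cast h2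
      linarith
    have hxge : (lam - 1) * lam ^ ((-2:ℝ) * (S k : ℝ)) ≤ |x| := by
      calc (lam - 1) * lam ^ ((-2:ℝ) * (S k : ℝ))
          ≤ (lam - 1) * lam ^ ((2:ℝ) - (S (k+1) : ℝ)) :=
            mul_le_mul_of_nonneg_left hexp1 hlam1'.le
        _ ≤ |x| := hxlow
    have hwpos : (0:ℝ) ≤ (lam - 1) * lam ^ ((-2:ℝ) * (S k : ℝ)) := by positivity
    have hxBge : ((lam - 1) * lam ^ ((-2:ℝ) * (S k : ℝ))) ^ B ≤ |x| ^ B :=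
      Real.rpow_le_rpow hwpos hxge hB0.le
    have hweq : ((lam - 1) * lam ^ ((-2:ℝ) * (S k : ℝ))) ^ B
        = (lam - 1) ^ B * lam ^ (-(S k : ℝ) * (2*B)) := by
      rw [Real.mul_rpow hlam1'.le (Real.rpow_nonneg hlam0.le _),
          ← Real.rpow_mul hlam0.le]
      ring_nf
    have hinvle : (max (C * (2:ℝ) ^ β) ((cl * (lam - 1) ^ B)⁻¹))⁻¹ ≤ cl * (lam - 1) ^ B := by
      have hpos : (0:ℝ) < cl * (lam - 1) ^ B := by positivity
      have hle : (cl * (lam - 1) ^ B)⁻¹ ≤ max (C * (2:ℝ) ^ β) ((cl * (lam - 1) ^ B)⁻¹) :=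
        le_max_right _ _
      calc (max (C * (2:ℝ) ^ β) ((cl * (lam - 1) ^ B)⁻¹))⁻¹
          ≤ ((cl * (lam - 1) ^ B)⁻¹)⁻¹ := by
            apply inv_anti₀ (by positivity) hle
        _ = cl * (lam - 1) ^ B := inv_inv _
    have hlampow : (0:ℝ) ≤ lam ^ (-(S k : ℝ) * (2*B)) := (Real.rpow_nonneg hlam0.le _)
    calc (max (C * (2:ℝ) ^ β) ((cl * (lam - 1) ^ B)⁻¹))⁻¹ * lam ^ (-(S k : ℝ) * (2*B))
        ≤ (cl * (lam - 1) ^ B) * lam ^ (-(S k : ℝ) * (2*B)) :=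
          mul_le_mul_of_nonneg_right hinvle hlampow
      _ = cl * ((lam - 1) ^ B * lam ^ (-(S k : ℝ) * (2*B))) := by ring
      _ = cl * ((lam - 1) * lam ^ ((-2:ℝ) * (S k : ℝ))) ^ B := by rw [hweq]
      _ ≤ cl * |x| ^ B := mul_le_mul_of_nonneg_left hxBge hcl0.le
      _ ≤ |h x - h 0| := hHl
      _ = |f^[S k] ct - ct| := by rw [hdist]
  · -- upper bound
    have hHu := hHup x hxmem
    have hxup := hup k hk
    have hxβle : |x| ^ β ≤ ((2:ℝ) * lam ^ (-(S k : ℝ)/2)) ^ β :=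
      Real.rpow_le_rpow (abs_nonneg x) hxup hβ0.le
    have hweq : ((2:ℝ) * lam ^ (-(S k : ℝ)/2)) ^ β
        = (2:ℝ) ^ β * lam ^ (-(S k : ℝ) * (β/2)) := by
      rw [Real.mul_rpow (by norm_num) (Real.rpow_nonneg hlam0.le _),
          ← Real.rpow_mul hlam0.le]
      ring_nf
    calc |f^[S k] ct - ct| = |h x - h 0| := by rw [hdist]
      _ ≤ C * |x| ^ β := hHu
      _ ≤ C * ((2:ℝ) ^ β * lam ^ (-(S k : ℝ) * (β/2))) := by
          rw [← hweq]
          exact mul_le_mul_of_nonneg_left hxβle hC0.le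
      _ = (C * (2:ℝ) ^ β) * lam ^ (-(S k : ℝ) * (β/2)) := by ring
      _ ≤ (max (C * (2:ℝ) ^ β) ((cl * (lam - 1) ^ B)⁻¹)) * lam ^ (-(S k : ℝ) * (β/2)) :=
          mul_le_mul_of_nonneg_right (le_max_left _ _) (Real.rpow_nonneg hlam0.le _)
end

section
/- The map f has exponential recurrence of the orbit of its turning point: limsup_{n→∞} (−log |f^n(c̃) − c̃|)/n is a finite and strictly positive real number, i.e. it belongs to (0, +∞). -/
open MeasureTheory Filter Set


private lemma tent_aux17 (lam : ℝ) (hlam1 : 1 < lam)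
    (h5 : 0 < lam * (2 - lam ^ 3 * (2 - lam)) - 1) : (1.7:ℝ) ≤ lam := by
  by_contra hcon
  push_neg at hcon
  have hg : lam^4 - lam^3 - lam^2 - lam + 1 < 0 := by
    nlinarith [mul_pos (sub_pos.mpr hlam1) (sub_pos.mpr hcon), sq_nonneg (lam-1.35),
      sq_nonneg (lam-1), sq_nonneg (lam-1.7),
      mul_pos (mul_pos (sub_pos.mpr hlam1) (sub_pos.mpr hcon)) (sub_pos.mpr hlam1),
      sq_nonneg lam]
  nlinarith [mul_pos (sub_pos.mpr hlam1) (neg_pos.mpr hg)]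

private lemma tent_auxnum (lam : ℝ) (hlam17 : (1.7:ℝ) ≤ lam) :
    2*(lam+1) ≤ lam^5*(lam-1) := by
  nlinarith [sq_nonneg (lam-1.7), pow_le_pow_left₀ (by norm_num : (0:ℝ) ≤ 1.7) hlam17 5]

private lemma tent_auxwin (lam a b L L' X Y : ℝ) (hlam1 : 1 < lam)
    (ha : 0 ≤ a) (hb : 0 ≤ b) (h5 : lam^5 * a ≤ 2*b)
    (hnum : 2*(lam+1) ≤ lam^5*(lam-1)) (hsplit : lam * L' = a + b)
    (hLL : L ≤ L') (hci : b ≤ X) (htri : X - L ≤ Y) : a ≤ Y := by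
  have hstep : (lam+1)*a ≤ (lam-1)*b := by
    nlinarith [mul_le_mul_of_nonneg_right h5 (by linarith : (0:ℝ) ≤ lam - 1),
      mul_le_mul_of_nonneg_right hnum ha]
  nlinarith [hstep]

set_option maxHeartbeats 1600000 in
theorem exponential_recurrence_of_turning_point
    (lam : ℝ) (hlam1 : 1 < lam) (hlam2 : lam ≤ 2)
    (T : ℝ → ℝ) (hT : ∀ x : ℝ, T x = lam * (1 - |x|) - 1)
    (c : ℕ → ℝ) (hc : ∀ i : ℕ, c i = T^[i] 0)
    (S : ℤ → ℕ) (hSm2 : S (-2) = 0) (hSm1 : S (-1) = 1)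
    (hSrec : ∀ k : ℤ, 0 ≤ k → S k = S (k - 1) + S (k - 2))
    (hcne : ∀ j : ℕ, 1 ≤ j → c j ≠ 0)
    (hc2neg : c 2 < 0) (hc1pos : 0 < c 1)
    (hsame : ∀ k : ℤ, 2 ≤ k → ∀ j : ℕ, 1 ≤ j → j < S (k - 2) →
      (0 < c (S (k - 1) + j) ↔ 0 < c j))
    (hopp : ∀ k : ℤ, 2 ≤ k → (0 < c (S k) ↔ c (S (k - 2)) < 0))
    (hdec : ∀ k : ℤ, 0 ≤ k → |c (S (k + 1))| < |c (S k)|)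
    (hc34 : |c 3| < |c 4|)
    (h : ℝ → ℝ) (h' : ℝ → ℝ) (hinv : ℝ → ℝ)
    (hmono : StrictMonoOn h (Set.Icc (-1 : ℝ) 1))
    (hbij : Set.BijOn h (Set.Icc (-1 : ℝ) 1) (Set.Icc (-1 : ℝ) 1))
    (hhd : ∀ x ∈ Set.Icc (-1 : ℝ) 1, HasDerivWithinAt h (h' x) (Set.Icc (-1 : ℝ) 1) x)
    (hC1 : ContinuousOn h' (Set.Icc (-1 : ℝ) 1))
    (hinvl : ∀ x ∈ Set.Icc (-1 : ℝ) 1, hinv (h x) = x)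
    (hinvr : ∀ y ∈ Set.Icc (-1 : ℝ) 1, h (hinv y) = y)
    (h'ne : ∀ x ∈ Set.Icc (-1 : ℝ) 1, x ≠ 0 → h' x ≠ 0)
    (h'0 : h' 0 = 0)
    (αp αm M δ : ℝ) (hαp : 0 < αp) (hαm : 0 < αm) (hM : 0 < M)
    (hδ : 0 < δ) (hδ1 : δ ≤ 1)
    (hnfp : ∀ x ∈ Set.Ioo (0 : ℝ) δ,
      Real.exp (-M) * x ^ αp ≤ h' x ∧ h' x ≤ Real.exp M * x ^ αp)
    (hnfm : ∀ x ∈ Set.Ioo (-δ) (0 : ℝ),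
      Real.exp (-M) * |x| ^ αm ≤ h' x ∧ h' x ≤ Real.exp M * |x| ^ αm)
    (f : ℝ → ℝ) (hfdef : ∀ x : ℝ, f x = h (T (hinv x)))
    (ct : ℝ) (hct : ct = h 0) :
    limsup (fun n : ℕ => (((-(Real.log |f^[n] ct - ct|)) / (n : ℝ) : ℝ) : EReal)) atTop
      ∈ Set.Ioo (0 : EReal) ⊤ := by
  have hlam0 : (0:ℝ) < lam := lt_trans one_pos hlam1
  have c0 : c 0 = 0 := by rw [hc]; rfl
  have cSucc : ∀ n : ℕ, c (n+1) = T (c n) := by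
    intro n; rw [hc, hc, Function.iterate_succ_apply']
  have cle : ∀ n : ℕ, |c n| ≤ 1 := by
    intro n; induction n with
    | zero => rw [c0]; norm_num
    | succ n ih =>
      have h0 := abs_nonneg (c n)
      rw [cSucc, hT, abs_le]
      constructor
      · nlinarith only [mul_nonneg hlam0.le (by linarith : (0:ℝ) ≤ 1 - |c n|)]
      · nlinarith only [mul_le_mul_of_nonneg_left (by linarith : 1 - |c n| ≤ 1) hlam0.le,
          hlam2, h0, hlam0]
  have cIcc : ∀ n : ℕ, c n ∈ Set.Icc (-1:ℝ) 1 := fun n => abs_le.mp (cle n)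
  -- Lipschitz
  have lip : ∀ x y : ℝ, |T x - T y| ≤ lam * |x - y| := by
    intro x y
    have e : T x - T y = lam * (|y| - |x|) := by rw [hT, hT]; ring
    rw [e, abs_mul, abs_of_pos hlam0]
    have h2 := abs_abs_sub_abs_le_abs_sub y x
    rw [abs_sub_comm y x] at h2
    exact mul_le_mul_of_nonneg_left h2 hlam0.le
  have shadow : ∀ n j : ℕ, |c (n + j) - c j| ≤ lam ^ j * |c n| := by
    intro n j; induction j with
    | zero => simp [c0]
    | succ j ih =>
      have e : n + (j+1) = (n+j) + 1 := by ring
      rw [e, cSucc, cSucc]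
      calc |T (c (n+j)) - T (c j)| ≤ lam * |c (n+j) - c j| := lip _ _
        _ ≤ lam * (lam ^ j * |c n|) := mul_le_mul_of_nonneg_left ih (le_of_lt hlam0)
        _ = lam ^ (j+1) * |c n| := by ring
  -- equality steps
  have step0 : ∀ x : ℝ, |T x - T 0| = lam * |x| := by
    intro x
    have e : T x - T 0 = -(lam * |x|) := by rw [hT, hT]; simp; ring
    rw [e, abs_neg, abs_mul, abs_of_pos hlam0, abs_abs]
  have stepSame : ∀ x y : ℝ, x ≠ 0 → y ≠ 0 → (0 < x ↔ 0 < y) → |T x - T y| = lam * |x - y| := by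
    intro x y hx hy hxy
    rcases lt_or_gt_of_ne hx with hx' | hx'
    · have hy' : y < 0 := by
        rcases lt_or_gt_of_ne hy with hh | hh
        · exact hh
        · exact absurd (hxy.mpr hh) (not_lt.mpr (le_of_lt hx'))
      have e : T x - T y = lam * (x - y) := by
        rw [hT, hT, abs_of_neg hx', abs_of_neg hy']; ring
      rw [e, abs_mul, abs_of_pos hlam0]
    · have hy' : 0 < y := hxy.mp hx'
      have e : T x - T y = -(lam * (x - y)) := by
        rw [hT, hT, abs_of_pos hx', abs_of_pos hy']; ring
      rw [e, abs_neg, abs_mul, abs_of_pos hlam0]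
  -- Fibonacci
  obtain ⟨s, hs⟩ : ∃ s : ℕ → ℕ, ∀ k, s k = S (k:ℤ) := ⟨fun k => S (k:ℤ), fun _ => rfl⟩
  have hS0 : S (0:ℤ) = 1 := by
    have := hSrec 0 le_rfl; norm_num at this; rw [this, hSm1, hSm2]
  have hs0 : s 0 = 1 := by rw [hs]; exact_mod_cast hS0
  have hs1 : s 1 = 2 := by
    rw [hs]
    have h1 := hSrec 1 (by norm_num); norm_num at h1
    have e : ((1:ℕ):ℤ) = 1 := by norm_num
    rw [e, h1, hSm1, hS0]
  have hsrec : ∀ k : ℕ, s (k+2) = s (k+1) + s k := by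
    intro k
    have hrec := hSrec ((k:ℤ)+2) (by omega)
    have e1 : ((k:ℤ)+2) - 1 = (k:ℤ)+1 := by ring
    have e2 : ((k:ℤ)+2) - 2 = (k:ℤ) := by ring
    rw [e1, e2] at hrec
    rw [hs, hs, hs]
    have e3 : (((k+2):ℕ):ℤ) = (k:ℤ)+2 := by push_cast; ring
    have e4 : (((k+1):ℕ):ℤ) = (k:ℤ)+1 := by push_cast; ring
    rw [e3, e4]; exact hrec
  have hspos : ∀ k : ℕ, 1 ≤ s k := by
    intro k
    induction k using Nat.strong_induction_on with
    | _ k ih =>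
      match k with
      | 0 => omega
      | 1 => omega
      | (m+2) =>
        have h1 := hsrec m
        have h2 := ih (m+1) (by omega)
        omega
  have hsmono : ∀ k : ℕ, s k < s (k+1) := by
    intro k
    match k with
    | 0 => show s 0 < s 1; omega
    | (m+1) =>
      show s (m+1) < s (m+2)
      have h1 := hsrec m; have h2 := hspos m; omega
  have hsmono' : ∀ k l : ℕ, k ≤ l → s k ≤ s l := by
    intro k l hkl
    induction l, hkl using Nat.le_induction with
    | base => exact le_rfl
    | succ l hkl ih => exact le_trans ih (hsmono l).le
  have hsge : ∀ k : ℕ, k + 1 ≤ s k := by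
    intro k; induction k with
    | zero => omega
    | succ k ih => have := hsmono k; omega
  have hsle2 : ∀ k : ℕ, s (k+1) ≤ 2 * s k := by
    intro k
    match k with
    | 0 => show s 1 ≤ 2 * s 0; omega
    | (m+1) =>
      show s (m+2) ≤ 2 * s (m+1)
      have h1 := hsrec m
      have h2 := hsmono' m (m+1) (by omega)
      omega
  -- u
  obtain ⟨u, hu⟩ : ∃ u : ℕ → ℝ, ∀ k, u k = |c (s k)| := ⟨fun k => |c (s k)|, fun _ => rfl⟩
  have hudec : ∀ k : ℕ, u (k+1) < u k := by
    intro k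
    have hd := hdec (k:ℤ) (by omega)
    rw [hu, hu, hs, hs]
    have e : (((k+1):ℕ):ℤ) = (k:ℤ)+1 := by push_cast; ring
    rw [e]; exact hd
  have hudec' : ∀ k l : ℕ, k < l → u l < u k := by
    intro k l hkl
    induction l, hkl using Nat.le_induction with
    | base => exact hudec k
    | succ l hkl ih => exact lt_trans (hudec l) ih
  have hupos : ∀ k : ℕ, 0 < u k := by
    intro k; rw [hu]
    exact abs_pos.mpr (hcne _ (hspos k))
  have hule : ∀ k : ℕ, u k ≤ 1 := by intro k; rw [hu]; exact cle _
  have hsame' : ∀ k j : ℕ, 1 ≤ j → j < s k → (0 < c (s (k+1) + j) ↔ 0 < c j) := by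
    intro k j h1 h2
    have hkk : (2:ℤ) ≤ (k:ℤ)+2 := by omega
    have hsm := hsame ((k:ℤ)+2) hkk j h1 (by rw [show (k:ℤ)+2-2 = (k:ℤ) by ring, ← hs]; exact h2)
    rw [show (k:ℤ)+2-1 = (k:ℤ)+1 by ring] at hsm
    rw [hs, show (((k+1):ℕ):ℤ) = (k:ℤ)+1 by push_cast; ring]
    exact hsm
  have hopp' : ∀ k : ℕ, (0 < c (s (k+2)) ↔ c (s k) < 0) := by
    intro k
    have hkk : (2:ℤ) ≤ (k:ℤ)+2 := by omega
    have hop := hopp ((k:ℤ)+2) hkk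
    rw [show (k:ℤ)+2-2 = (k:ℤ) by ring] at hop
    rw [hs, hs, show (((k+2):ℕ):ℤ) = (k:ℤ)+2 by push_cast; ring]
    exact hop
  -- window equality
  have window : ∀ k j : ℕ, j ≤ s k → |c (s (k+1) + j) - c j| = lam ^ j * u (k+1) := by
    intro k j
    induction j with
    | zero => intro _; rw [Nat.add_zero, c0, sub_zero, pow_zero, one_mul, hu]
    | succ j ih =>
      intro hj
      have hj' : j ≤ s k := by omega
      have e : s (k+1) + (j+1) = (s (k+1) + j) + 1 := by ring
      rw [e, cSucc, cSucc]
      rcases Nat.eq_zero_or_pos j with rfl | hjpos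
      · rw [Nat.add_zero, c0, step0, pow_one, hu]
      · have hlt : j < s k := by omega
        have hside := hsame' k j hjpos hlt
        have hne1 : c (s (k+1) + j) ≠ 0 := hcne _ (by have := hspos (k+1); omega)
        have hne2 : c j ≠ 0 := hcne _ (by omega)
        rw [stepSame _ _ hne1 hne2 hside, ih hj']
        ring
  -- key identity
  have key : ∀ k : ℕ, u (k+2) + u k = lam ^ (s k) * u (k+1) := by
    intro k
    have hw := window k (s k) le_rfl
    rw [show s (k+1) + s k = s (k+2) from (hsrec k).symm] at hw
    have hopk := hopp' k
    have hne1 : c (s (k+2)) ≠ 0 := hcne _ (hspos _)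
    have hne2 : c (s k) ≠ 0 := hcne _ (hspos _)
    rw [hu, hu]
    rcases lt_or_gt_of_ne hne1 with hn | hn
    · have hp : 0 < c (s k) := by
        rcases lt_or_gt_of_ne hne2 with hh | hh
        · exact absurd (hopk.mpr hh) (not_lt.mpr (le_of_lt hn))
        · exact hh
      rw [abs_of_neg hn, abs_of_pos hp, ← hw,
        abs_of_neg (by linarith : c (s (k+2)) - c (s k) < 0)]
      ring
    · have hp : c (s k) < 0 := hopk.mp hn
      rw [abs_of_pos hn, abs_of_neg hp, ← hw,
        abs_of_pos (by linarith : 0 < c (s (k+2)) - c (s k))]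
      ring
  have uup : ∀ k : ℕ, lam ^ (s k) * u (k+1) ≤ 2 * u k := by
    intro k
    have h1 := key k
    have h2 : u (k+2) ≤ u k := le_of_lt (hudec' k (k+2) (by omega))
    linarith
  have ulow : ∀ k : ℕ, u k ≤ lam ^ (s k) * u (k+1) := by
    intro k
    have h1 := key k
    have h2 := le_of_lt (hupos (k+2))
    linarith
  have uexp : ∀ k : ℕ, u 0 ≤ lam ^ (s (k+1)) * u k := by
    intro k
    induction k with
    | zero =>
      have h1 : (1:ℝ) ≤ lam ^ (s 1) := one_le_pow₀ hlam1.le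
      nlinarith only [mul_le_mul_of_nonneg_right h1 (hupos 0).le]
    | succ k ih =>
      have h1 := ulow k
      calc u 0 ≤ lam ^ (s (k+1)) * u k := ih
        _ ≤ lam ^ (s (k+1)) * (lam ^ (s k) * u (k+1)) :=
            mul_le_mul_of_nonneg_left h1 (pow_pos hlam0 (s (k+1))).le
        _ = lam ^ (s (k+1) + s k) * u (k+1) := by rw [pow_add]; ring
        _ = lam ^ (s (k+2)) * u (k+1) := by rw [hsrec]
  -- numerics
  have hc1 : c 1 = lam - 1 := by
    rw [show (1:ℕ) = 0 + 1 from rfl, cSucc, c0, hT]; simp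
  have hc2 : c 2 = lam * (2 - lam) - 1 := by
    rw [show (2:ℕ) = 1 + 1 from rfl, cSucc, hc1, hT,
      abs_of_pos (by linarith : (0:ℝ) < lam - 1)]
    ring
  have hs2 : s 2 = 3 := by have e := hsrec 0; norm_num at e; omega
  have hs3 : s 3 = 5 := by
    have e := hsrec 0; have e1 := hsrec 1
    norm_num at e e1; omega
  have hc3neg : c 3 < 0 := by
    have ho := hopp' 0
    rw [hs2, hs0] at ho
    rcases lt_or_gt_of_ne (hcne 3 (by omega)) with hh | hh
    · exact hh
    · exact absurd (ho.mp hh) (not_lt.mpr (le_of_lt hc1pos))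
  have hc3 : c 3 = lam * (lam * (2 - lam)) - 1 := by
    rw [show (3:ℕ) = 2 + 1 from rfl, cSucc, hT, abs_of_neg hc2neg, hc2]
    ring
  have hc4pos : 0 < c 4 := by
    have hsm := hsame' 1 1 le_rfl (by rw [hs1]; omega)
    rw [hs2] at hsm
    exact hsm.mpr hc1pos
  have hc4 : c 4 = lam ^ 2 * (lam * (2 - lam)) - 1 := by
    rw [show (4:ℕ) = 3 + 1 from rfl, cSucc, hT, abs_of_neg hc3neg, hc3]
    ring
  have hc5pos : 0 < c 5 := by
    have ho := hopp' 1
    rw [hs3, hs1] at ho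
    exact ho.mpr hc2neg
  have hc5 : c 5 = lam * (2 - lam ^ 3 * (2 - lam)) - 1 := by
    rw [show (5:ℕ) = 4 + 1 from rfl, cSucc, hT, abs_of_pos hc4pos, hc4]
    ring
  have hlam17 : (1.7:ℝ) ≤ lam :=
    tent_aux17 lam hlam1 (by rw [← hc5]; exact hc5pos)
  have hnum : 2*(lam+1) ≤ lam^5*(lam-1) := tent_auxnum lam hlam17
  -- closest return lower bound
  have Qcl : ∀ k j : ℕ, 1 ≤ j → j < s (k+1) → u (k+1) ≤ |c j| := by
    intro k
    induction k using Nat.strong_induction_on with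
    | _ k ih =>
      rcases k with _ | _ | _ | m
      · intro j h1 h2
        rw [hs1] at h2
        have : j = 1 := by omega
        subst this
        rw [show |c 1| = u 0 by rw [hu, hs0]]
        exact (hudec 0).le
      · intro j h1 h2
        rw [hs2] at h2
        interval_cases j
        · rw [show |c 1| = u 0 by rw [hu, hs0]]
          exact (hudec' 0 2 (by omega)).le
        · rw [show |c 2| = u 1 by rw [hu, hs1]]
          exact (hudec 1).le
      · intro j h1 h2
        rw [hs3] at h2
        interval_cases j
        · rw [show |c 1| = u 0 by rw [hu, hs0]]
          exact (hudec' 0 3 (by omega)).le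
        · rw [show |c 2| = u 1 by rw [hu, hs1]]
          exact (hudec' 1 3 (by omega)).le
        · rw [show |c 3| = u 2 by rw [hu, hs2]]
          exact (hudec 2).le
        · have e2 : u 2 = |c 3| := by rw [hu, hs2]
          have := hudec 2
          linarith [hc34]
      · intro j h1 h2
        replace h2 : j < s (m+4) := h2
        show u (m+4) ≤ |c j|
        rcases Nat.lt_or_ge j (s (m+3)) with hj | hj
        · exact le_trans (hudec (m+3)).le (ih (m+2) (by omega) j h1 hj)
        · rcases Nat.eq_or_lt_of_le hj with hj2 | hj2
          · rw [show |c j| = u (m+3) by rw [hu, hj2]]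
            exact (hudec (m+3)).le
          · -- window case
            set i := j - s (m+3) with hidef
            have hji : j = s (m+3) + i := by omega
            have hi1 : 1 ≤ i := by omega
            have hi2 : i < s (m+2) := by
              have e4 : s (m+4) = s (m+3) + s (m+2) := hsrec (m+2)
              omega
            have hsh : |c (s (m+3) + i) - c i| ≤ lam ^ i * u (m+3) := by
              have := shadow (s (m+3)) i
              rwa [← hu] at this
            have hci : u (m+2) ≤ |c i| := ih (m+1) (by omega) i hi1 hi2
            have hkey : u (m+4) + u (m+2) = lam ^ (s (m+2)) * u (m+3) := key (m+2)
            have hspos2 := hspos (m+2)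
            -- lam ^ i * u (m+3) ≤ lam ^ (s (m+2) - 1) * u (m+3)
            have hpowle : lam ^ i * u (m+3) ≤ lam ^ (s (m+2) - 1) * u (m+3) := by
              apply mul_le_mul_of_nonneg_right _ (hupos (m+3)).le
              exact pow_le_pow_right₀ hlam1.le (by omega)
            have hsplit : lam * (lam ^ (s (m+2) - 1) * u (m+3)) = u (m+4) + u (m+2) := by
              have e5 : lam * lam ^ (s (m+2) - 1) = lam ^ (s (m+2)) := by
                rw [← pow_succ']
                congr 1
                omega
              rw [← mul_assoc, e5, ← hkey]
            -- lam^5 * u (m+4) ≤ 2 * u (m+2)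
            have h5le : lam ^ 5 * u (m+4) ≤ 2 * u (m+2) := by
              have ha := uup (m+3)
              have hb : lam ^ 5 ≤ lam ^ (s (m+3)) := by
                apply pow_le_pow_right₀ hlam1.le
                rw [← hs3]
                exact hsmono' 3 (m+3) (by omega)
              have hc' : u (m+3) ≤ u (m+2) := (hudec (m+2)).le
              nlinarith only [mul_le_mul_of_nonneg_right hb (hupos (m+4)).le, ha, hc']
            -- assemble
            have htri : |c i| - lam ^ i * u (m+3) ≤ |c j| := by
              have h7 := abs_sub_abs_le_abs_sub (c i) (c j)
              rw [abs_sub_comm] at h7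
              have h8 : |c j - c i| ≤ lam ^ i * u (m+3) := by rw [hji]; exact hsh
              linarith
            exact tent_auxwin lam (u (m+4)) (u (m+2)) (lam ^ i * u (m+3))
              (lam ^ (s (m+2) - 1) * u (m+3)) (|c i|) (|c j|) hlam1
              (hupos (m+4)).le (hupos (m+2)).le h5le hnum hsplit hpowle hci htri
  -- global exponential lower bound |c n| ≥ u 0 / lam^(3n)
  have R : ∀ n : ℕ, 1 ≤ n → u 0 ≤ lam ^ (3*n) * |c n| := by
    intro n hn
    have hex : ∃ m : ℕ, n < s m := ⟨n, by have := hsge n; omega⟩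
    have hm := Nat.find_spec hex
    have hm0 : Nat.find hex ≠ 0 := by
      intro e
      rw [e, hs0] at hm
      omega
    obtain ⟨k, hk⟩ : ∃ k, Nat.find hex = k+1 := ⟨Nat.find hex - 1, by omega⟩
    rw [hk] at hm
    have hkn : s k ≤ n := by
      have := Nat.find_min hex (show k < Nat.find hex by omega)
      omega
    have hQ : u (k+1) ≤ |c n| := Qcl k n hn hm
    have h1 : u 0 ≤ lam ^ (s (k+2)) * u (k+1) := uexp (k+1)
    have h2 : s (k+2) ≤ 3*n := by
      have := hsrec k
      have := hsle2 k
      omega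
    calc u 0 ≤ lam ^ (s (k+2)) * u (k+1) := h1
      _ ≤ lam ^ (3*n) * u (k+1) :=
          mul_le_mul_of_nonneg_right (pow_le_pow_right₀ hlam1.le h2) (hupos (k+1)).le
      _ ≤ lam ^ (3*n) * |c n| :=
          mul_le_mul_of_nonneg_left hQ (le_of_lt (pow_pos hlam0 _))
  -- exponential upper bound along s (k+1)
  have Uup : ∀ k : ℕ, lam ^ (s k) * u (k+1) ≤ 2 := by
    intro k
    calc lam ^ (s k) * u (k+1) ≤ 2 * u k := uup k
      _ ≤ 2 := by linarith [hule k]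
  -- conjugacy orbit
  have hfc : ∀ n : ℕ, f^[n] ct = h (c n) := by
    intro n; induction n with
    | zero => rw [Function.iterate_zero_apply, hct, c0]
    | succ n ih =>
      rw [Function.iterate_succ_apply', ih, hfdef, hinvl _ (cIcc n), ← cSucc]
  -- derivative facts
  have hcont : ContinuousOn h (Set.Icc (-1:ℝ) 1) := fun x hx => (hhd x hx).continuousWithinAt
  have hderivAt : ∀ x ∈ Set.Ioo (-1:ℝ) 1, HasDerivAt h (h' x) x := by
    intro x hx
    exact (hhd x (Ioo_subset_Icc_self hx)).hasDerivAt (Icc_mem_nhds hx.1 hx.2)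
  have mvt : ∀ a b : ℝ, -1 ≤ a → a < b → b ≤ 1 →
      ∃ ξ ∈ Set.Ioo a b, h b - h a = h' ξ * (b - a) := by
    intro a b ha hab hb
    obtain ⟨ξ, hξ, he⟩ := exists_hasDerivAt_eq_slope h h' hab
      (hcont.mono (Icc_subset_Icc ha hb))
      (fun x hx => hderivAt x ⟨lt_of_le_of_lt ha hx.1, lt_of_lt_of_le hx.2 hb⟩)
    refine ⟨ξ, hξ, ?_⟩
    rw [he, div_mul_cancel₀ _ (sub_ne_zero.mpr (ne_of_gt hab))]
  -- exponents
  obtain ⟨p, hpdef⟩ : ∃ p : ℝ, p = max αp αm + 1 := ⟨_, rfl⟩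
  obtain ⟨q, hqdef⟩ : ∃ q : ℝ, q = min αp αm + 1 := ⟨_, rfl⟩
  have hp0 : 0 < p := by have := le_max_left αp αm; simp only [hpdef]; linarith
  have hq0 : 0 < q := by have := lt_min hαp hαm; simp only [hqdef]; linarith
  have hqαp : q ≤ αp + 1 := by have := min_le_left αp αm; simp only [hqdef]; linarith
  have hqαm : q ≤ αm + 1 := by have := min_le_right αp αm; simp only [hqdef]; linarith
  have hαpp : αp + 1 ≤ p := by have := le_max_left αp αm; simp only [hpdef]; linarith
  have hαmp : αm + 1 ≤ p := by have := le_max_right αp αm; simp only [hpdef]; linarith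
  -- constants
  have hmemIcc : ∀ x : ℝ, x ∈ Set.Icc (-1:ℝ) 1 → h x ∈ Set.Icc (-1:ℝ) 1 :=
    fun x hx => hbij.mapsTo hx
  have h0mem : (0:ℝ) ∈ Set.Icc (-1:ℝ) 1 := by norm_num
  have hδmem : δ ∈ Set.Icc (-1:ℝ) 1 := by constructor <;> linarith
  have hδmem' : -δ ∈ Set.Icc (-1:ℝ) 1 := by constructor <;> linarith
  have hmp : 0 < h δ - h 0 := by
    have := hmono h0mem hδmem hδ
    linarith
  have hmm : 0 < h 0 - h (-δ) := by
    have := hmono hδmem' h0mem (by linarith)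
    linarith
  obtain ⟨A, hAdef⟩ : ∃ A : ℝ,
      A = min (Real.exp (-M) * (2:ℝ)⁻¹ ^ p) (min (h δ - h 0) (h 0 - h (-δ))) := ⟨_, rfl⟩
  obtain ⟨B, hBdef⟩ : ∃ B : ℝ, B = max (Real.exp M) (2 / δ ^ q) := ⟨_, rfl⟩
  have hrp2 : (0:ℝ) < (2:ℝ)⁻¹ ^ p := Real.rpow_pos_of_pos (by norm_num) p
  have hδq : (0:ℝ) < δ ^ q := Real.rpow_pos_of_pos hδ q
  have hA : 0 < A := by
    rw [hAdef]
    apply lt_min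
    · positivity
    · exact lt_min hmp hmm
  have hB : 0 < B := by
    rw [hBdef]; exact lt_of_lt_of_le (Real.exp_pos M) (le_max_left _ _)
  have hd2 : ∀ x : ℝ, x ∈ Set.Icc (-1:ℝ) 1 → |h x - h 0| ≤ 2 := by
    intro x hx
    have h1 := hmemIcc x hx
    have h2 := hmemIcc 0 h0mem
    rw [Set.mem_Icc] at h1 h2
    rw [abs_le]
    constructor <;> linarith
  -- the two-sided bound
  have hhb : ∀ x : ℝ, x ∈ Set.Icc (-1:ℝ) 1 → x ≠ 0 →
      A * |x| ^ p ≤ |h x - h 0| ∧ |h x - h 0| ≤ B * |x| ^ q := by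
    intro x hx hne
    rcases lt_or_gt_of_ne hne with hneg | hpos
    · -- x < 0
      have habs : |x| = -x := abs_of_neg hneg
      have habs0 : 0 < |x| := abs_pos.mpr hne
      have hx1 : -1 ≤ x := hx.1
      have hle1 : |x| ≤ 1 := by rw [habs]; linarith
      have hmemx : x ∈ Set.Icc (-1:ℝ) 1 := hx
      have habsm : |h x - h 0| = h 0 - h x := by
        have := hmono hmemx h0mem hneg
        rw [abs_of_neg (by linarith : h x - h 0 < 0)]
        ring
      rcases lt_or_ge (-δ) x with hxδ | hxδ
      · -- -δ < x < 0
        constructor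
        · -- lower bound via MVT on [x, x/2]
          obtain ⟨ξ, hξ, he⟩ := mvt x (x/2) hx1 (by linarith) (by linarith)
          have hξδ : ξ ∈ Set.Ioo (-δ) (0:ℝ) := ⟨lt_trans hxδ hξ.1, by have := hξ.2; linarith⟩
          have hb1 := (hnfm ξ hξδ).1
          have hξx : |x|/2 ≤ |ξ| := by
            rw [habs, abs_of_neg hξδ.2]
            have := hξ.2
            linarith
          have hra : (|x|/2) ^ αm ≤ |ξ| ^ αm :=
            Real.rpow_le_rpow (by positivity) hξx hαm.le
          have hhalf : h (x/2) ≤ h 0 := by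
            apply le_of_lt
            exact hmono (by constructor <;> linarith) h0mem (by linarith)
          have hlow : Real.exp (-M) * (|x|/2) ^ αm * (|x|/2) ≤ h 0 - h x := by
            have he2 : h (x/2) - h x = h' ξ * (|x|/2) := by
              rw [he, habs]; ring_nf
            have hstep : Real.exp (-M) * (|x|/2) ^ αm * (|x|/2) ≤ h' ξ * (|x|/2) := by
              apply mul_le_mul_of_nonneg_right _ (by positivity)
              calc Real.exp (-M) * (|x|/2) ^ αm ≤ Real.exp (-M) * |ξ| ^ αm := by
                    apply mul_le_mul_of_nonneg_left hra (Real.exp_pos _).le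
                _ ≤ h' ξ := hb1
            linarith [hstep, he2.symm.le]
          have hxp : A * |x| ^ p ≤ Real.exp (-M) * (|x|/2) ^ αm * (|x|/2) := by
            have e1 : (|x|/2) ^ αm * (|x|/2) = (|x|/2) ^ (αm + 1) := by
              rw [Real.rpow_add (by positivity), Real.rpow_one]
            have e2 : (|x|/2) ^ p ≤ (|x|/2) ^ (αm+1) :=
              Real.rpow_le_rpow_of_exponent_ge (by positivity) (by linarith) hαmp
            have e3 : (|x|/2) ^ p = |x| ^ p * (2:ℝ)⁻¹ ^ p := by
              rw [show |x|/2 = |x| * 2⁻¹ by ring, Real.mul_rpow (abs_nonneg x) (by norm_num)]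
            have e4 : A ≤ Real.exp (-M) * (2:ℝ)⁻¹ ^ p := by rw [hAdef]; exact min_le_left _ _
            calc A * |x| ^ p ≤ Real.exp (-M) * (2:ℝ)⁻¹ ^ p * |x| ^ p := by
                  apply mul_le_mul_of_nonneg_right e4 (by positivity)
              _ = Real.exp (-M) * ((|x|/2) ^ p) := by rw [e3]; ring
              _ ≤ Real.exp (-M) * ((|x|/2) ^ (αm+1)) := by
                  apply mul_le_mul_of_nonneg_left e2 (Real.exp_pos _).le
              _ = Real.exp (-M) * (|x|/2) ^ αm * (|x|/2) := by rw [← e1]; ring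
          rw [habsm]
          linarith
        · -- upper bound via MVT on [x, 0]
          obtain ⟨ξ, hξ, he⟩ := mvt x 0 hx1 hneg (by norm_num)
          have hξδ : ξ ∈ Set.Ioo (-δ) (0:ℝ) := ⟨lt_trans hxδ hξ.1, hξ.2⟩
          have hb1 := (hnfm ξ hξδ).2
          have hξx : |ξ| ≤ |x| := by
            rw [habs, abs_of_neg hξδ.2]
            have := hξ.1
            linarith
          have hra : |ξ| ^ αm ≤ |x| ^ αm := Real.rpow_le_rpow (abs_nonneg _) hξx hαm.le
          have he2 : h 0 - h x = h' ξ * |x| := by rw [he, habs]; ring_nf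
          have hup : h 0 - h x ≤ Real.exp M * |x| ^ αm * |x| := by
            rw [he2]
            apply mul_le_mul_of_nonneg_right _ (abs_nonneg x)
            calc h' ξ ≤ Real.exp M * |ξ| ^ αm := hb1
              _ ≤ Real.exp M * |x| ^ αm := by
                  apply mul_le_mul_of_nonneg_left hra (Real.exp_pos _).le
          have e1 : |x| ^ αm * |x| = |x| ^ (αm+1) := by
            rw [Real.rpow_add habs0, Real.rpow_one]
          have e2 : |x| ^ (αm+1) ≤ |x| ^ q :=
            Real.rpow_le_rpow_of_exponent_ge habs0 hle1 hqαm
          have e4 : Real.exp M ≤ B := by rw [hBdef]; exact le_max_left _ _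
          rw [habsm]
          calc h 0 - h x ≤ Real.exp M * |x| ^ αm * |x| := hup
            _ = Real.exp M * |x| ^ (αm+1) := by rw [← e1]; ring
            _ ≤ Real.exp M * |x| ^ q := by
                apply mul_le_mul_of_nonneg_left e2 (Real.exp_pos _).le
            _ ≤ B * |x| ^ q := by
                apply mul_le_mul_of_nonneg_right e4 (by positivity)
      · -- x ≤ -δ
        have hδx : δ ≤ |x| := by rw [habs]; linarith
        constructor
        · have hxm : h x ≤ h (-δ) := by
            rcases eq_or_lt_of_le hxδ with hh | hh
            · rw [← hh]
            · exact le_of_lt (hmono hmemx hδmem' hh)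
          have h1 : A ≤ h 0 - h (-δ) := by
            rw [hAdef]; exact le_trans (min_le_right _ _) (min_le_right _ _)
          have h2 : |x| ^ p ≤ 1 := Real.rpow_le_one (abs_nonneg x) hle1 hp0.le
          rw [habsm]
          have h4 : h 0 - h x ≥ h 0 - h (-δ) := by linarith
          nlinarith only [mul_le_mul_of_nonneg_left h2 hA.le, h1, h4]
        · have h1 : δ ^ q ≤ |x| ^ q := Real.rpow_le_rpow hδ.le hδx hq0.le
          have h2 : 2 / δ ^ q ≤ B := by rw [hBdef]; exact le_max_right _ _
          have h3 := hd2 x hmemx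
          calc |h x - h 0| ≤ 2 := h3
            _ = (2 / δ ^ q) * δ ^ q := by field_simp
            _ ≤ B * δ ^ q := mul_le_mul_of_nonneg_right h2 hδq.le
            _ ≤ B * |x| ^ q := mul_le_mul_of_nonneg_left h1 hB.le
    · -- 0 < x
      have habs : |x| = x := abs_of_pos hpos
      have habs0 : 0 < |x| := abs_pos.mpr hne
      have hx1 : x ≤ 1 := hx.2
      have hle1 : |x| ≤ 1 := by rw [habs]; linarith
      have hmemx : x ∈ Set.Icc (-1:ℝ) 1 := hx
      have habsm : |h x - h 0| = h x - h 0 := by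
        have := hmono h0mem hmemx hpos
        rw [abs_of_pos (by linarith : 0 < h x - h 0)]
      rcases lt_or_ge x δ with hxδ | hxδ
      · constructor
        · -- lower via MVT on [x/2, x]
          obtain ⟨ξ, hξ, he⟩ := mvt (x/2) x (by linarith) (by linarith) hx1
          have hξδ : ξ ∈ Set.Ioo (0:ℝ) δ := ⟨by have := hξ.1; linarith, lt_trans hξ.2 hxδ⟩
          have hb1 := (hnfp ξ hξδ).1
          have hξx : x/2 ≤ ξ := (hξ.1).le
          have hra : (x/2) ^ αp ≤ ξ ^ αp := Real.rpow_le_rpow (by positivity) hξx hαp.le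
          have hhalf : h 0 ≤ h (x/2) := by
            apply le_of_lt
            exact hmono h0mem (by constructor <;> linarith) (by linarith)
          have hlow : Real.exp (-M) * (x/2) ^ αp * (x/2) ≤ h x - h 0 := by
            have he2 : h x - h (x/2) = h' ξ * (x/2) := by rw [he]; ring_nf
            have hstep : Real.exp (-M) * (x/2) ^ αp * (x/2) ≤ h' ξ * (x/2) := by
              apply mul_le_mul_of_nonneg_right _ (by positivity)
              calc Real.exp (-M) * (x/2) ^ αp ≤ Real.exp (-M) * ξ ^ αp := by
                    apply mul_le_mul_of_nonneg_left hra (Real.exp_pos _).le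
                _ ≤ h' ξ := hb1
            linarith [hstep, he2.symm.le]
          have hxp : A * |x| ^ p ≤ Real.exp (-M) * (x/2) ^ αp * (x/2) := by
            have e1 : (x/2) ^ αp * (x/2) = (x/2) ^ (αp + 1) := by
              rw [Real.rpow_add (by positivity), Real.rpow_one]
            have e2 : (x/2) ^ p ≤ (x/2) ^ (αp+1) :=
              Real.rpow_le_rpow_of_exponent_ge (by positivity) (by linarith) hαpp
            have e3 : (x/2) ^ p = |x| ^ p * (2:ℝ)⁻¹ ^ p := by
              rw [show x/2 = |x| * 2⁻¹ by rw [habs]; ring,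
                Real.mul_rpow (abs_nonneg x) (by norm_num)]
            have e4 : A ≤ Real.exp (-M) * (2:ℝ)⁻¹ ^ p := by rw [hAdef]; exact min_le_left _ _
            calc A * |x| ^ p ≤ Real.exp (-M) * (2:ℝ)⁻¹ ^ p * |x| ^ p := by
                  apply mul_le_mul_of_nonneg_right e4 (by positivity)
              _ = Real.exp (-M) * ((x/2) ^ p) := by rw [e3]; ring
              _ ≤ Real.exp (-M) * ((x/2) ^ (αp+1)) := by
                  apply mul_le_mul_of_nonneg_left e2 (Real.exp_pos _).le
              _ = Real.exp (-M) * (x/2) ^ αp * (x/2) := by rw [← e1]; ring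
          rw [habsm]
          linarith
        · -- upper via MVT on [0, x]
          obtain ⟨ξ, hξ, he⟩ := mvt 0 x (by norm_num) hpos hx1
          have hξδ : ξ ∈ Set.Ioo (0:ℝ) δ := ⟨hξ.1, lt_trans hξ.2 hxδ⟩
          have hb1 := (hnfp ξ hξδ).2
          have hra : ξ ^ αp ≤ x ^ αp := Real.rpow_le_rpow hξ.1.le hξ.2.le hαp.le
          have he2 : h x - h 0 = h' ξ * x := by rw [he]; ring_nf
          have e1 : x ^ αp * x = x ^ (αp+1) := by
            rw [Real.rpow_add hpos, Real.rpow_one]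
          have e2 : x ^ (αp+1) ≤ x ^ q :=
            Real.rpow_le_rpow_of_exponent_ge hpos hx1 hqαp
          have e4 : Real.exp M ≤ B := by rw [hBdef]; exact le_max_left _ _
          rw [habsm, habs]
          calc h x - h 0 = h' ξ * x := he2
            _ ≤ Real.exp M * x ^ αp * x := by
                apply mul_le_mul_of_nonneg_right _ hpos.le
                calc h' ξ ≤ Real.exp M * ξ ^ αp := hb1
                  _ ≤ Real.exp M * x ^ αp := by
                      apply mul_le_mul_of_nonneg_left hra (Real.exp_pos _).le
            _ = Real.exp M * x ^ (αp+1) := by rw [← e1]; ring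
            _ ≤ Real.exp M * x ^ q := by
                apply mul_le_mul_of_nonneg_left e2 (Real.exp_pos _).le
            _ ≤ B * x ^ q := by
                apply mul_le_mul_of_nonneg_right e4 (by positivity)
      · -- δ ≤ x
        have hδx : δ ≤ |x| := by rw [habs]; linarith
        constructor
        · have hxm : h δ ≤ h x := by
            rcases eq_or_lt_of_le hxδ with hh | hh
            · rw [hh]
            · exact le_of_lt (hmono hδmem hmemx hh)
          have h1 : A ≤ h δ - h 0 := by
            rw [hAdef]; exact le_trans (min_le_right _ _) (min_le_left _ _)
          have h2 : |x| ^ p ≤ 1 := Real.rpow_le_one (abs_nonneg x) hle1 hp0.le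
          rw [habsm]
          have h4 : h x - h 0 ≥ h δ - h 0 := by linarith
          nlinarith only [mul_le_mul_of_nonneg_left h2 hA.le, h1, h4]
        · have h1 : δ ^ q ≤ |x| ^ q := Real.rpow_le_rpow hδ.le hδx hq0.le
          have h2 : 2 / δ ^ q ≤ B := by rw [hBdef]; exact le_max_right _ _
          have h3 := hd2 x hmemx
          calc |h x - h 0| ≤ 2 := h3
            _ = (2 / δ ^ q) * δ ^ q := by field_simp
            _ ≤ B * δ ^ q := mul_le_mul_of_nonneg_right h2 hδq.le
            _ ≤ B * |x| ^ q := mul_le_mul_of_nonneg_left h1 hB.le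
  -- rewrite the goal
  have hgoal : (fun n : ℕ => (((-(Real.log |f^[n] ct - ct|)) / (n : ℝ) : ℝ) : EReal))
      = fun n : ℕ => (((-(Real.log |h (c n) - h 0|)) / (n : ℝ) : ℝ) : EReal) := by
    funext n; rw [hfc n, hct]
  rw [hgoal]
  have hloglam : 0 < Real.log lam := Real.log_pos hlam1
  have hcnpos : ∀ n : ℕ, 1 ≤ n → 0 < |c n| := fun n hn => abs_pos.mpr (hcne n hn)
  constructor
  · -- limsup > 0
    obtain ⟨ε, hεdef⟩ : ∃ ε : ℝ, ε = q * Real.log lam / 4 := ⟨_, rfl⟩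
    have hεpos : 0 < ε := by
      rw [hεdef]; have := mul_pos hq0 hloglam; linarith
    have hfreq : ∀ N : ℕ, ∃ n ≥ N, ε ≤ -Real.log |h (c n) - h 0| / n := by
      intro N
      obtain ⟨E, hEdef⟩ : ∃ E : ℝ, E = Real.log B + q * Real.log 2 := ⟨_, rfl⟩
      obtain ⟨K, hKdef⟩ : ∃ K : ℕ, K = max (Nat.ceil (2*|E| / (q * Real.log lam))) N :=
        ⟨_, rfl⟩
      obtain ⟨n, hndef⟩ : ∃ n : ℕ, n = s (K+1) := ⟨_, rfl⟩
      refine ⟨n, ?_, ?_⟩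
      · have h9 : N ≤ K := by rw [hKdef]; exact le_max_right _ _
        have h10 := hsge (K+1)
        omega
      · have hn1 : 1 ≤ n := by rw [hndef]; exact hspos (K+1)
        have hnpos : (0:ℝ) < (n:ℝ) := by exact_mod_cast hn1
        have hcnu : |c n| = u (K+1) := by rw [hndef, hu]
        have hub2 := (hhb (c n) (cIcc n) (hcne n hn1)).2
        rw [hcnu] at hub2
        have hulam : u (K+1) ≤ 2 / lam ^ (s K) := by
          rw [le_div_iff₀ (pow_pos hlam0 _)]
          have := Uup K
          linarith
        have hxb1 := (hhb (c n) (cIcc n) (hcne n hn1)).1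
        have hz : 0 < |h (c n) - h 0| :=
          lt_of_lt_of_le (mul_pos hA (Real.rpow_pos_of_pos (hcnpos n hn1) p)) hxb1
        have hlog1 : Real.log |h (c n) - h 0| ≤ Real.log B + q * Real.log (u (K+1)) := by
          calc Real.log |h (c n) - h 0| ≤ Real.log (B * u (K+1) ^ q) :=
              Real.log_le_log hz hub2
            _ = Real.log B + q * Real.log (u (K+1)) := by
                rw [Real.log_mul hB.ne' (Real.rpow_pos_of_pos (hupos (K+1)) q).ne',
                  Real.log_rpow (hupos (K+1))]
        have hlog2 : Real.log (u (K+1)) ≤ Real.log 2 - (s K : ℝ) * Real.log lam := by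
          calc Real.log (u (K+1)) ≤ Real.log (2 / lam ^ (s K)) :=
              Real.log_le_log (hupos (K+1)) hulam
            _ = Real.log 2 - (s K : ℝ) * Real.log lam := by
                rw [Real.log_div (by norm_num) (pow_ne_zero _ hlam0.ne'), Real.log_pow]
        have hsK : 2*|E| / (q * Real.log lam) ≤ (s K : ℝ) := by
          have h1 : (Nat.ceil (2*|E| / (q * Real.log lam)) : ℝ) ≤ (s K : ℝ) := by
            have h12 : Nat.ceil (2*|E| / (q * Real.log lam)) ≤ s K := by
              have h13 : Nat.ceil (2*|E| / (q * Real.log lam)) ≤ K := by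
                rw [hKdef]; exact le_max_left _ _
              have h14 := hsge K
              omega
            exact_mod_cast h12
          exact le_trans (Nat.le_ceil _) h1
        have hEb : E ≤ q * Real.log lam / 2 * (s K : ℝ) := by
          have h1 : 2*|E| ≤ q * Real.log lam * (s K : ℝ) := by
            rw [div_le_iff₀ (mul_pos hq0 hloglam)] at hsK
            linarith
          have h2 : E ≤ |E| := le_abs_self E
          linarith only [h1, h2]
        rw [le_div_iff₀ hnpos]
        have hcast : (n:ℝ) ≤ 2 * (s K : ℝ) := by
          have := hsle2 K
          rw [hndef]
          exact_mod_cast this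
        have hlogn : -Real.log |h (c n) - h 0| ≥ q * (s K : ℝ) * Real.log lam - E := by
          have hmul := mul_le_mul_of_nonneg_left hlog2 hq0.le
          linarith only [hlog1, hmul, hEdef]
        have hεn : ε * n ≤ q * Real.log lam / 2 * (s K : ℝ) := by
          rw [hεdef]
          have h4 : (0:ℝ) ≤ q * Real.log lam / 4 := by
            have := mul_pos hq0 hloglam; linarith
          linarith only [mul_le_mul_of_nonneg_left hcast h4]
        linarith only [hεn, hEb, hlogn]
    have hfreq' : ∃ᶠ n in atTop, ((ε:ℝ) : EReal) ≤
        (((-(Real.log |h (c n) - h 0|)) / (n : ℝ) : ℝ) : EReal) := by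
      rw [frequently_atTop]
      intro N
      obtain ⟨n, hn1, hn2⟩ := hfreq N
      exact ⟨n, hn1, EReal.coe_le_coe_iff.mpr hn2⟩
    have hlb := le_limsup_of_frequently_le hfreq'
    have hεE : (0:EReal) < ((ε:ℝ):EReal) := by exact_mod_cast hεpos
    exact lt_of_lt_of_le hεE hlb
  · -- limsup < ⊤
    obtain ⟨C, hCdef⟩ : ∃ C : ℝ,
        C = |Real.log A| + p * |Real.log (u 0)| + 3 * p * Real.log lam := ⟨_, rfl⟩
    have hCb : ∀ n : ℕ, 1 ≤ n → -Real.log |h (c n) - h 0| / n ≤ C := by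
      intro n hn
      have hcn := hcnpos n hn
      have hnpos : (0:ℝ) < (n:ℝ) := by exact_mod_cast hn
      have hxb := (hhb (c n) (cIcc n) (hcne n hn)).1
      have hy : 0 < |h (c n) - h 0| :=
        lt_of_lt_of_le (mul_pos hA (Real.rpow_pos_of_pos hcn p)) hxb
      have hlog1 : Real.log A + p * Real.log |c n| ≤ Real.log |h (c n) - h 0| := by
        have h15 := Real.log_le_log (mul_pos hA (Real.rpow_pos_of_pos hcn p)) hxb
        rwa [Real.log_mul hA.ne' (Real.rpow_pos_of_pos hcn p).ne', Real.log_rpow hcn] at h15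
      have hlogc : Real.log (u 0) - 3*(n:ℝ)*Real.log lam ≤ Real.log |c n| := by
        have hR := R n hn
        have := Real.log_le_log (hupos 0) hR
        rw [Real.log_mul (by positivity) hcn.ne', Real.log_pow] at this
        push_cast at this
        linarith
      rw [div_le_iff₀ hnpos]
      have h1 : -Real.log A ≤ |Real.log A| := neg_le_abs _
      have h2 : -Real.log (u 0) ≤ |Real.log (u 0)| := neg_le_abs _
      have h3 : -(p * Real.log |c n|) ≤ p * (3*(n:ℝ)*Real.log lam - Real.log (u 0)) := by
        have := mul_le_mul_of_nonneg_left (by linarith : -Real.log |c n| ≤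
          3*(n:ℝ)*Real.log lam - Real.log (u 0)) hp0.le
        linarith
      have hn1 : (1:ℝ) ≤ (n:ℝ) := by exact_mod_cast hn
      have hCn : |Real.log A| + p*|Real.log (u 0)| + 3*p*(n:ℝ)*Real.log lam ≤ C * n := by
        rw [hCdef]
        have hnn : (0:ℝ) ≤ (n:ℝ) - 1 := by linarith
        have hco : (0:ℝ) ≤ |Real.log A| + p * |Real.log (u 0)| :=
          add_nonneg (abs_nonneg _) (mul_nonneg hp0.le (abs_nonneg _))
        nlinarith only [mul_nonneg hco hnn, hloglam, hp0, hnn]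
      have h5 : p * (-Real.log (u 0)) ≤ p * |Real.log (u 0)| :=
        mul_le_mul_of_nonneg_left (neg_le_abs _) hp0.le
      linarith only [hlog1, h3, h1, h5, hCn]
    have hub : limsup (fun n : ℕ =>
        (((-(Real.log |h (c n) - h 0|)) / (n : ℝ) : ℝ) : EReal)) atTop ≤ ((C:ℝ):EReal) := by
      apply limsup_le_of_le (by isBoundedDefault)
      filter_upwards [eventually_ge_atTop 1] with n hn
      exact EReal.coe_le_coe_iff.mpr (hCb n hn)
    exact lt_of_le_of_lt hub (EReal.coe_lt_top C)
end

section
/- The map f has a Lorenz-like singularity at c̃ with right order ℓ^+ := α^+/(α^+ + 1) ∈ (0,1) and left order ℓ^− := α^−/(α^− + 1) ∈ (0,1): there exist L > 0 and δ₁ > 0 such that for every x ∈ (c̃, c̃ + δ₁), L^{−1} |x − c̃|^{−ℓ^+} ≤ |f′(x)| ≤ L |x − c̃|^{−ℓ^+}, and for every x ∈ (c̃ − δ₁, c̃), L^{−1} |x − c̃|^{−ℓ^−} ≤ |f′(x)| ≤ L |x − c̃|^{−ℓ^−}. -/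
/-!
Write `x = h y`. By the chain rule `f' x = h' (T y) * T' y / h' y` with `|T' y| = lam`, and for
small `|y| ≠ 0` the point `T y` stays in a compact interval avoiding `0`, so `|f' x| ≍ 1 / h' y ≍
|y| ^ (-α)`. Integrating the non-flatness bounds gives `|x - h 0| ≍ |y| ^ (α + 1)`, hence
`|y| ^ α ≍ |x - h 0| ^ (α / (α + 1))`. The left side is the right side for `t ↦ -h (-t)`.
-/

open Filter Set Topology

lemma mul_rpow_add_one_div_le_sub_of_le_deriv {g g' : ℝ → ℝ} {α a r t : ℝ} (hα : 0 < α + 1)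
    (hg : ContinuousOn g (Icc 0 r)) (hg' : ∀ s ∈ Ioo 0 r, HasDerivAt g (g' s) s)
    (hle : ∀ s ∈ Ioo 0 r, a * s ^ α ≤ g' s) (ht : t ∈ Icc 0 r) :
    a * t ^ (α + 1) / (α + 1) ≤ g t - g 0 := by
  have hmono : MonotoneOn (fun s => g s - a * s ^ (α + 1) / (α + 1)) (Icc 0 r) := by
    refine monotoneOn_of_hasDerivWithinAt_nonneg (f' := fun s => g' s - a * s ^ α)
      (convex_Icc 0 r) ?_ ?_ ?_
    · exact hg.sub (((continuousOn_id.rpow_const fun _ _ => Or.inr hα.le).const_smul a).div_const _)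
    · rw [interior_Icc]
      intro s hs
      have hpow := (Real.hasDerivAt_rpow_const (x := s) (p := α + 1) (Or.inl hs.1.ne')).const_mul a
      refine ((hg' s hs).sub (hpow.div_const (α + 1))).hasDerivWithinAt.congr_deriv ?_
      rw [add_sub_cancel_right]
      field_simp
    · rw [interior_Icc]
      exact fun s hs => sub_nonneg.2 (hle s hs)
  have := hmono ⟨le_rfl, ht.1.trans ht.2⟩ ht ht.1
  simp only [Real.zero_rpow hα.ne', mul_zero, zero_div, sub_zero] at this
  linarith

lemma sub_le_mul_rpow_add_one_div_of_deriv_le {g g' : ℝ → ℝ} {α b r t : ℝ} (hα : 0 < α + 1)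
    (hg : ContinuousOn g (Icc 0 r)) (hg' : ∀ s ∈ Ioo 0 r, HasDerivAt g (g' s) s)
    (hle : ∀ s ∈ Ioo 0 r, g' s ≤ b * s ^ α) (ht : t ∈ Icc 0 r) :
    g t - g 0 ≤ b * t ^ (α + 1) / (α + 1) := by
  have := mul_rpow_add_one_div_le_sub_of_le_deriv (g := -g) (a := -b) hα hg.neg
    (fun s hs => (hg' s hs).neg) (fun s hs => by simpa using hle s hs) ht
  simp only [Pi.neg_apply, neg_mul, neg_div] at this
  linarith

lemma bounds_rpow_of_bounds_rpow_add_one {α K t u p : ℝ} (hα : 0 ≤ α) (hK : 0 < K) (ht : 0 < t)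
    (hu : K⁻¹ * t ^ (α + 1) / (α + 1) ≤ u ∧ u ≤ K * t ^ (α + 1) / (α + 1))
    (hp : K⁻¹ * t ^ α ≤ p ∧ p ≤ K * t ^ α) :
    K⁻¹ * ((α + 1) / K) ^ (α / (α + 1)) * u ^ (α / (α + 1)) ≤ p ∧
      p ≤ K * ((α + 1) * K) ^ (α / (α + 1)) * u ^ (α / (α + 1)) := by
  have hα1 : 0 < α + 1 := by linarith
  have hℓ : 0 ≤ α / (α + 1) := div_nonneg hα hα1.le
  have hu0 : 0 ≤ u := le_trans (by positivity) hu.1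
  have htα : t ^ α = (t ^ (α + 1)) ^ (α / (α + 1)) := by
    rw [← Real.rpow_mul ht.le, mul_div_cancel₀ _ hα1.ne']
  have hlo : (α + 1) / K * u ≤ t ^ (α + 1) := by
    rw [div_mul_eq_mul_div, div_le_iff₀ hK]
    have := hu.2
    rw [le_div_iff₀ hα1] at this
    linarith
  have hhi : t ^ (α + 1) ≤ (α + 1) * K * u := by
    have := hu.1
    rw [div_le_iff₀ hα1, inv_mul_le_iff₀ hK] at this
    linarith
  constructor
  · calc K⁻¹ * ((α + 1) / K) ^ (α / (α + 1)) * u ^ (α / (α + 1))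
        = K⁻¹ * ((α + 1) / K * u) ^ (α / (α + 1)) := by
          rw [Real.mul_rpow (by positivity) hu0, mul_assoc]
      _ ≤ K⁻¹ * t ^ α := by
          rw [htα]; gcongr
      _ ≤ p := hp.1
  · calc p ≤ K * t ^ α := hp.2
      _ ≤ K * ((α + 1) * K * u) ^ (α / (α + 1)) := by
          rw [htα]; gcongr
      _ = K * ((α + 1) * K) ^ (α / (α + 1)) * u ^ (α / (α + 1)) := by
          rw [Real.mul_rpow (by positivity) hu0, mul_assoc]

def PowerSingularOn (φ : ℝ → ℝ) (c ℓ C : ℝ) (s : Set ℝ) : Prop :=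
  ∀ x ∈ s, C⁻¹ * |x - c| ^ (-ℓ) ≤ |φ x| ∧ |φ x| ≤ C * |x - c| ^ (-ℓ)

lemma exists_powerSingularOn_of_bounds {φ : ℝ → ℝ} {c ℓ c₁ c₂ : ℝ} {s : Set ℝ} (hc₁ : 0 < c₁)
    (h : ∀ x ∈ s, c₁ * |x - c| ^ (-ℓ) ≤ |φ x| ∧ |φ x| ≤ c₂ * |x - c| ^ (-ℓ)) :
    ∃ C > 0, PowerSingularOn φ c ℓ C s := by
  have hC : (max c₁⁻¹ c₂)⁻¹ ≤ c₁ := by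
    simpa using inv_anti₀ (inv_pos.2 hc₁) (le_max_left c₁⁻¹ c₂)
  refine ⟨max c₁⁻¹ c₂, lt_max_of_lt_left (inv_pos.2 hc₁), fun x hx => ⟨?_, ?_⟩⟩
  · exact le_trans (by gcongr) (h x hx).1
  · exact (h x hx).2.trans (by gcongr; exact le_max_right _ _)

lemma PowerSingularOn.mono {φ : ℝ → ℝ} {c ℓ C D : ℝ} {s t : Set ℝ}
    (h : PowerSingularOn φ c ℓ C s) (hC : 0 < C) (hCD : C ≤ D) (hts : t ⊆ s) :
    PowerSingularOn φ c ℓ D t := fun x hx =>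
  ⟨le_trans (by gcongr) (h x (hts hx)).1, (h x (hts hx)).2.trans (by gcongr)⟩

lemma exists_powerSingularOn_Ioo_right {φ g g' : ℝ → ℝ} {α K m M r : ℝ} (hα : 0 ≤ α)
    (hK : 0 < K) (hm : 0 < m) (hr : 0 ≤ r)
    (hg : ContinuousOn g (Icc 0 r)) (hg' : ∀ t ∈ Ioo 0 r, HasDerivAt g (g' t) t)
    (hbound : ∀ t ∈ Ioo 0 r, K⁻¹ * t ^ α ≤ g' t ∧ g' t ≤ K * t ^ α)
    (hφ : ∀ t ∈ Ioo 0 r, m ≤ |φ (g t)| * |g' t| ∧ |φ (g t)| * |g' t| ≤ M) :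
    ∃ C > 0, PowerSingularOn φ (g 0) (α / (α + 1)) C (Ioo (g 0) (g r)) := by
  have hα1 : 0 < α + 1 := by linarith
  set ℓ := α / (α + 1)
  set κ₁ := K⁻¹ * ((α + 1) / K) ^ ℓ
  set κ₂ := K * ((α + 1) * K) ^ ℓ
  refine exists_powerSingularOn_of_bounds (c₁ := m / κ₂) (c₂ := M / κ₁) (by positivity) ?_
  intro x hx
  obtain ⟨t, ht, rfl⟩ := intermediate_value_Ioo hr hg hx
  have htI : t ∈ Icc 0 r := Ioo_subset_Icc_self ht
  have hp := bounds_rpow_of_bounds_rpow_add_one hα hK ht.1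
    ⟨mul_rpow_add_one_div_le_sub_of_le_deriv hα1 hg hg' (fun s hs => (hbound s hs).1) htI,
      sub_le_mul_rpow_add_one_div_of_deriv_le hα1 hg hg' (fun s hs => (hbound s hs).2) htI⟩
    (hbound t ht)
  have hu : 0 < g t - g 0 := sub_pos.2 hx.1
  have hp0 : 0 < g' t := lt_of_lt_of_le (by positivity) hp.1
  obtain ⟨hlo, hhi⟩ := hφ t ht
  rw [abs_of_pos hp0] at hlo hhi
  rw [abs_of_pos hu, Real.rpow_neg hu.le, ← div_eq_mul_inv, ← div_eq_mul_inv, div_div, div_div,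
    div_le_iff₀ (by positivity), le_div_iff₀ (by positivity)]
  constructor
  · calc m ≤ |φ (g t)| * g' t := hlo
      _ ≤ |φ (g t)| * (κ₂ * (g t - g 0) ^ ℓ) := by gcongr; exact hp.2
  · calc |φ (g t)| * (κ₁ * (g t - g 0) ^ ℓ) ≤ |φ (g t)| * g' t := by gcongr; exact hp.1
      _ ≤ M := hhi

lemma exists_powerSingularOn_Ioo_left {φ g g' : ℝ → ℝ} {α K m M r : ℝ} (hα : 0 ≤ α)
    (hK : 0 < K) (hm : 0 < m) (hr : 0 ≤ r)
    (hg : ContinuousOn g (Icc (-r) 0)) (hg' : ∀ t ∈ Ioo (-r) 0, HasDerivAt g (g' t) t)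
    (hbound : ∀ t ∈ Ioo (-r) 0, K⁻¹ * |t| ^ α ≤ g' t ∧ g' t ≤ K * |t| ^ α)
    (hφ : ∀ t ∈ Ioo (-r) 0, m ≤ |φ (g t)| * |g' t| ∧ |φ (g t)| * |g' t| ≤ M) :
    ∃ C > 0, PowerSingularOn φ (g 0) (α / (α + 1)) C (Ioo (g (-r)) (g 0)) := by
  have hneg : ∀ t ∈ Ioo 0 r, -t ∈ Ioo (-r) 0 := fun t ht => ⟨neg_lt_neg ht.2, neg_neg_of_pos ht.1⟩
  obtain ⟨C, hC, hsing⟩ := exists_powerSingularOn_Ioo_right (φ := fun x => φ (-x))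
    (g := fun t => -g (-t)) (g' := fun t => g' (-t)) hα hK hm hr
    (hg.comp continuousOn_neg fun t ht => ⟨neg_le_neg ht.2, neg_nonpos.2 ht.1⟩).neg
    (fun t ht => by
      have := ((hg' (-t) (hneg t ht)).comp t (hasDerivAt_neg t)).neg
      rwa [mul_neg_one, neg_neg] at this)
    (fun t ht => by simpa [abs_of_pos ht.1] using hbound (-t) (hneg t ht))
    (fun t ht => by simpa using hφ (-t) (hneg t ht))
  refine ⟨C, hC, fun x hx => ?_⟩
  have := hsing (-x) ⟨by simpa using hx.2, by simpa using hx.1⟩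
  simpa only [neg_zero, neg_neg, neg_sub_neg, abs_sub_comm] using this

lemma exists_powerSingularOn_two_sided {φ g g' : ℝ → ℝ} {αp αm K m M r : ℝ} (hαp : 0 ≤ αp)
    (hαm : 0 ≤ αm) (hK : 0 < K) (hm : 0 < m) (hr : 0 < r) (hmono : StrictMonoOn g (Icc (-r) r))
    (hg : ContinuousOn g (Icc (-r) r)) (hg' : ∀ t ∈ Ioo (-r) r, HasDerivAt g (g' t) t)
    (hright : ∀ t ∈ Ioo 0 r, K⁻¹ * t ^ αp ≤ g' t ∧ g' t ≤ K * t ^ αp)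
    (hleft : ∀ t ∈ Ioo (-r) 0, K⁻¹ * |t| ^ αm ≤ g' t ∧ g' t ≤ K * |t| ^ αm)
    (hφ : ∀ t ∈ Ioo (-r) r, t ≠ 0 → m ≤ |φ (g t)| * |g' t| ∧ |φ (g t)| * |g' t| ≤ M) :
    ∃ L δ₁ : ℝ, 0 < L ∧ 0 < δ₁ ∧
      PowerSingularOn φ (g 0) (αp / (αp + 1)) L (Ioo (g 0) (g 0 + δ₁)) ∧
      PowerSingularOn φ (g 0) (αm / (αm + 1)) L (Ioo (g 0 - δ₁) (g 0)) := by
  obtain ⟨C₁, hC₁, hsing₁⟩ := exists_powerSingularOn_Ioo_right hαp hK hm hr.le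
    (hg.mono (Icc_subset_Icc (by linarith) le_rfl))
    (fun t ht => hg' t ⟨by linarith [ht.1], ht.2⟩) hright
    (fun t ht => hφ t ⟨by linarith [ht.1], ht.2⟩ ht.1.ne')
  obtain ⟨C₂, hC₂, hsing₂⟩ := exists_powerSingularOn_Ioo_left hαm hK hm hr.le
    (hg.mono (Icc_subset_Icc le_rfl (by linarith)))
    (fun t ht => hg' t ⟨ht.1, by linarith [ht.2]⟩) hleft
    (fun t ht => hφ t ⟨ht.1, by linarith [ht.2]⟩ ht.2.ne)
  have h₀ : (0 : ℝ) ∈ Icc (-r) r := ⟨by linarith, hr.le⟩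
  have hgr : g 0 < g r := hmono h₀ ⟨by linarith, le_rfl⟩ hr
  have hg_r : g (-r) < g 0 := hmono ⟨le_rfl, by linarith⟩ h₀ (by linarith)
  refine ⟨max C₁ C₂, min (g r - g 0) (g 0 - g (-r)), lt_max_of_lt_left hC₁, ?_,
    hsing₁.mono hC₁ (le_max_left _ _) fun x hx => ⟨hx.1, ?_⟩,
    hsing₂.mono hC₂ (le_max_right _ _) fun x hx => ⟨?_, hx.2⟩⟩
  · exact lt_min (sub_pos.2 hgr) (sub_pos.2 hg_r)
  · linarith [hx.2, min_le_left (g r - g 0) (g 0 - g (-r))]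
  · linarith [hx.1, min_le_right (g r - g 0) (g 0 - g (-r))]

lemma IsCompact.exists_pos_le_abs_le {X : Type*} [TopologicalSpace X] {K : Set X} {g : X → ℝ}
    (hK : IsCompact K) (hg : ContinuousOn g K) (hne : ∀ x ∈ K, g x ≠ 0) :
    ∃ m M : ℝ, 0 < m ∧ ∀ x ∈ K, m ≤ |g x| ∧ |g x| ≤ M := by
  rcases K.eq_empty_or_nonempty with rfl | hK'
  · exact ⟨1, 1, one_pos, by simp⟩
  obtain ⟨x₀, hx₀, hmin⟩ := hK.exists_isMinOn hK' hg.abs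
  obtain ⟨x₁, -, hmax⟩ := hK.exists_isMaxOn hK' hg.abs
  exact ⟨|g x₀|, |g x₁|, abs_pos.2 (hne x₀ hx₀), fun x hx => ⟨hmin hx, hmax hx⟩⟩

lemma StrictMonoOn.hasDerivAt_of_leftInvOn {h hinv : ℝ → ℝ} {a b c d y h'y : ℝ}
    (hmono : StrictMonoOn h (Icc a b)) (hbij : BijOn h (Icc a b) (Icc c d))
    (hinvl : ∀ x ∈ Icc a b, hinv (h x) = x) (hinvr : ∀ z ∈ Icc c d, h (hinv z) = z)
    (hy : y ∈ Ioo a b) (hd : HasDerivAt h h'y y) (hd0 : h'y ≠ 0) :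
    HasDerivAt hinv h'y⁻¹ (h y) := by
  have hyI : y ∈ Icc a b := Ioo_subset_Icc_self hy
  have hinv_mono : StrictMonoOn hinv (Icc c d) := by
    intro z₁ hz₁ z₂ hz₂ hlt
    obtain ⟨x₁, hx₁, rfl⟩ := hbij.surjOn hz₁
    obtain ⟨x₂, hx₂, rfl⟩ := hbij.surjOn hz₂
    rw [hinvl x₁ hx₁, hinvl x₂ hx₂]
    exact (hmono.lt_iff_lt hx₁ hx₂).1 hlt
  have ha : a ∈ Icc a b := ⟨le_rfl, hyI.1.trans hyI.2⟩
  have hb : b ∈ Icc a b := ⟨hyI.1.trans hyI.2, le_rfl⟩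
  have hJ : Icc c d ∈ 𝓝 (h y) := Icc_mem_nhds
    ((hbij.mapsTo ha).1.trans_lt (hmono ha hyI hy.1))
    ((hmono hyI hb hy.2).trans_le (hbij.mapsTo hb).2)
  have hcont : ContinuousAt hinv (h y) := by
    refine hinv_mono.continuousAt_of_image_mem_nhds hJ ?_
    rw [hinvl y hyI]
    exact mem_of_superset (Icc_mem_nhds hy.1 hy.2) fun x hx => ⟨h x, hbij.mapsTo hx, hinvl x hx⟩
  exact HasDerivAt.of_local_left_inverse hcont (by rwa [hinvl y hyI]) hd0
    (mem_of_superset hJ hinvr)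

lemma tent_mem_Icc {lam y : ℝ} (hlam : 0 < lam) (hy : |y| ≤ (lam - 1) / (2 * lam)) :
    lam * (1 - |y|) - 1 ∈ Icc ((lam - 1) / 2) (lam - 1) := by
  have : lam * |y| ≤ (lam - 1) / 2 := by
    calc lam * |y| ≤ lam * ((lam - 1) / (2 * lam)) := by gcongr
      _ = (lam - 1) / 2 := by field_simp
  constructor <;> nlinarith [abs_nonneg y]

lemma abs_deriv_conj_tent_mul_abs {lam : ℝ} {T h h' hinv f : ℝ → ℝ}
    (hT : ∀ x, T x = lam * (1 - |x|) - 1)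
    (hmono : StrictMonoOn h (Icc (-1 : ℝ) 1)) (hbij : BijOn h (Icc (-1 : ℝ) 1) (Icc (-1 : ℝ) 1))
    (hhd : ∀ x ∈ Icc (-1 : ℝ) 1, HasDerivWithinAt h (h' x) (Icc (-1 : ℝ) 1) x)
    (hinvl : ∀ x ∈ Icc (-1 : ℝ) 1, hinv (h x) = x) (hinvr : ∀ z ∈ Icc (-1 : ℝ) 1, h (hinv z) = z)
    (hf : ∀ x, f x = h (T (hinv x))) {y : ℝ} (hy : y ∈ Ioo (-1 : ℝ) 1) (hy0 : y ≠ 0)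
    (hTy : T y ∈ Ioo (-1 : ℝ) 1) (hd0 : h' y ≠ 0) :
    |deriv f (h y)| * |h' y| = |lam| * |h' (T y)| := by
  have hderiv : ∀ z ∈ Ioo (-1 : ℝ) 1, HasDerivAt h (h' z) z := fun z hz =>
    (hhd z (Ioo_subset_Icc_self hz)).hasDerivAt (Icc_mem_nhds hz.1 hz.2)
  have hinv' := hmono.hasDerivAt_of_leftInvOn hbij hinvl hinvr hy (hderiv y hy) hd0
  have hyinv : hinv (h y) = y := hinvl y (Ioo_subset_Icc_self hy)
  have hTd : HasDerivAt T (lam * -(SignType.sign y : ℝ)) (hinv (h y)) := by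
    rw [hyinv, funext hT]
    simpa using (((hasDerivAt_abs hy0).const_sub 1).const_mul lam).sub_const 1
  have hTd' : HasDerivAt h (h' (T y)) (T (hinv (h y))) := by
    rw [hyinv]; exact hderiv (T y) hTy
  have hfd := hTd'.comp (h y) (hTd.comp (h y) hinv')
  rw [funext hf, show (fun x => h (T (hinv x))) = h ∘ T ∘ hinv from rfl, hfd.deriv]
  have hsign : |(SignType.sign y : ℝ)| = 1 := by
    rcases hy0.lt_or_gt with hs | hs <;> simp [sign_neg, sign_pos, hs]
  rw [abs_mul, abs_mul, abs_mul, abs_neg, hsign, abs_inv, mul_one]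
  field_simp

/-- For small `|y| ≠ 0`, `T y` lies in `[(lam - 1) / 2, lam - 1]`, a compact interval avoiding the
critical point, so `|h' (T y)|` is bounded above and away from zero there. -/
lemma exists_bounds_abs_deriv_conj_tent_mul_abs {lam δ : ℝ} {T h h' hinv f : ℝ → ℝ}
    (hlam1 : 1 < lam) (hlam2 : lam ≤ 2) (hT : ∀ x, T x = lam * (1 - |x|) - 1)
    (hmono : StrictMonoOn h (Icc (-1 : ℝ) 1)) (hbij : BijOn h (Icc (-1 : ℝ) 1) (Icc (-1 : ℝ) 1))
    (hhd : ∀ x ∈ Icc (-1 : ℝ) 1, HasDerivWithinAt h (h' x) (Icc (-1 : ℝ) 1) x)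
    (hC1 : ContinuousOn h' (Icc (-1 : ℝ) 1))
    (hinvl : ∀ x ∈ Icc (-1 : ℝ) 1, hinv (h x) = x) (hinvr : ∀ z ∈ Icc (-1 : ℝ) 1, h (hinv z) = z)
    (h'ne : ∀ x ∈ Icc (-1 : ℝ) 1, x ≠ 0 → h' x ≠ 0) (hf : ∀ x, f x = h (T (hinv x)))
    (hδ : 0 < δ) :
    ∃ r m M : ℝ, 0 < r ∧ r ≤ δ ∧ r ≤ 1 ∧ 0 < m ∧ ∀ y ∈ Ioo (-r) r, y ≠ 0 →
      m ≤ |deriv f (h y)| * |h' y| ∧ |deriv f (h y)| * |h' y| ≤ M := by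
  have hlam : 0 < lam := by linarith
  have hr : 0 < min δ ((lam - 1) / (2 * lam)) := lt_min hδ (div_pos (by linarith) (by linarith))
  have hr1 : min δ ((lam - 1) / (2 * lam)) ≤ 1 :=
    (min_le_right _ _).trans ((div_le_one (by positivity)).2 (by linarith))
  have hKI : Icc ((lam - 1) / 2) (lam - 1) ⊆ Icc (-1) 1 :=
    Icc_subset_Icc (by linarith) (by linarith)
  obtain ⟨m, M, hm, hbounds⟩ := isCompact_Icc.exists_pos_le_abs_le (hC1.mono hKI)
    fun w hw => h'ne w (hKI hw) (by linarith [hw.1] : 0 < w).ne'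
  refine ⟨_, lam * m, lam * M, hr, min_le_left _ _, hr1, mul_pos hlam hm, fun y hy hy0 => ?_⟩
  have hy1 : y ∈ Ioo (-1 : ℝ) 1 := ⟨by linarith [hy.1], by linarith [hy.2]⟩
  have hTK : T y ∈ Icc ((lam - 1) / 2) (lam - 1) :=
    hT y ▸ tent_mem_Icc hlam ((abs_le.2 ⟨hy.1.le, hy.2.le⟩).trans (min_le_right _ _))
  have hTy1 : T y < 1 := by rw [hT]; nlinarith [abs_pos.2 hy0]
  rw [abs_deriv_conj_tent_mul_abs hT hmono hbij hhd hinvl hinvr hf hy1 hy0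
    ⟨by linarith [hTK.1], hTy1⟩ (h'ne y (Ioo_subset_Icc_self hy1) hy0), abs_of_pos hlam]
  exact ⟨mul_le_mul_of_nonneg_left (hbounds _ hTK).1 hlam.le,
    mul_le_mul_of_nonneg_left (hbounds _ hTK).2 hlam.le⟩

theorem lorenz_like_singularity_at_turning_point_general
    (lam : ℝ) (hlam1 : 1 < lam) (hlam2 : lam ≤ 2)
    (T : ℝ → ℝ) (hT : ∀ x : ℝ, T x = lam * (1 - |x|) - 1)
    (h : ℝ → ℝ) (h' : ℝ → ℝ) (hinv : ℝ → ℝ)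
    (hmono : StrictMonoOn h (Set.Icc (-1 : ℝ) 1))
    (hbij : Set.BijOn h (Set.Icc (-1 : ℝ) 1) (Set.Icc (-1 : ℝ) 1))
    (hhd : ∀ x ∈ Set.Icc (-1 : ℝ) 1, HasDerivWithinAt h (h' x) (Set.Icc (-1 : ℝ) 1) x)
    (hC1 : ContinuousOn h' (Set.Icc (-1 : ℝ) 1))
    (hinvl : ∀ x ∈ Set.Icc (-1 : ℝ) 1, hinv (h x) = x)
    (hinvr : ∀ y ∈ Set.Icc (-1 : ℝ) 1, h (hinv y) = y)
    (h'ne : ∀ x ∈ Set.Icc (-1 : ℝ) 1, x ≠ 0 → h' x ≠ 0)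
    (αp αm M δ : ℝ) (hαp : 0 < αp) (hαm : 0 < αm)
    (hδ : 0 < δ)
    (hnfp : ∀ x ∈ Set.Ioo (0 : ℝ) δ,
      Real.exp (-M) * x ^ αp ≤ h' x ∧ h' x ≤ Real.exp M * x ^ αp)
    (hnfm : ∀ x ∈ Set.Ioo (-δ) (0 : ℝ),
      Real.exp (-M) * |x| ^ αm ≤ h' x ∧ h' x ≤ Real.exp M * |x| ^ αm)
    (f : ℝ → ℝ) (hfdef : ∀ x : ℝ, f x = h (T (hinv x)))
    (ct : ℝ) (hct : ct = h 0) :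
    (0 < αp / (αp + 1) ∧ αp / (αp + 1) < 1) ∧
    (0 < αm / (αm + 1) ∧ αm / (αm + 1) < 1) ∧
    ∃ L δ₁ : ℝ, 0 < L ∧ 0 < δ₁ ∧
      (∀ x ∈ Set.Ioo ct (ct + δ₁),
        L⁻¹ * |x - ct| ^ (-(αp / (αp + 1))) ≤ |deriv f x| ∧
        |deriv f x| ≤ L * |x - ct| ^ (-(αp / (αp + 1)))) ∧
      (∀ x ∈ Set.Ioo (ct - δ₁) ct,
        L⁻¹ * |x - ct| ^ (-(αm / (αm + 1))) ≤ |deriv f x| ∧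
        |deriv f x| ≤ L * |x - ct| ^ (-(αm / (αm + 1)))) := by
  have horder : ∀ α : ℝ, 0 < α → 0 < α / (α + 1) ∧ α / (α + 1) < 1 := fun α hα =>
    ⟨by positivity, (div_lt_one (by linarith)).2 (by linarith)⟩
  refine ⟨horder αp hαp, horder αm hαm, ?_⟩
  obtain ⟨r, m, M', hr, hrδ, hr1, hm, hφ⟩ := exists_bounds_abs_deriv_conj_tent_mul_abs hlam1 hlam2
    hT hmono hbij hhd hC1 hinvl hinvr h'ne hfdef hδ
  have hI : Icc (-r) r ⊆ Icc (-1) 1 := Icc_subset_Icc (by linarith) hr1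
  subst hct
  exact exists_powerSingularOn_two_sided hαp.le hαm.le (Real.exp_pos M) hm hr (hmono.mono hI)
    (fun z hz => (hhd z (hI hz)).continuousWithinAt.mono hI)
    (fun z hz => (hhd z (hI (Ioo_subset_Icc_self hz))).hasDerivAt
      (Icc_mem_nhds (by linarith [hz.1]) (by linarith [hz.2])))
    (fun t ht => by simpa only [Real.exp_neg] using hnfp t ⟨ht.1, ht.2.trans_le hrδ⟩)
    (fun t ht => by simpa only [Real.exp_neg] using hnfm t ⟨by linarith [ht.1], ht.2⟩)
    hφ

theorem lorenz_like_singularity_at_turning_point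
    (lam : ℝ) (hlam1 : 1 < lam) (hlam2 : lam ≤ 2)
    (T : ℝ → ℝ) (hT : ∀ x : ℝ, T x = lam * (1 - |x|) - 1)
    (c : ℕ → ℝ) (hc : ∀ i : ℕ, c i = T^[i] 0)
    (h : ℝ → ℝ) (h' : ℝ → ℝ) (hinv : ℝ → ℝ)
    (hmono : StrictMonoOn h (Set.Icc (-1 : ℝ) 1))
    (hbij : Set.BijOn h (Set.Icc (-1 : ℝ) 1) (Set.Icc (-1 : ℝ) 1))
    (hhd : ∀ x ∈ Set.Icc (-1 : ℝ) 1, HasDerivWithinAt h (h' x) (Set.Icc (-1 : ℝ) 1) x)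
    (hC1 : ContinuousOn h' (Set.Icc (-1 : ℝ) 1))
    (hinvl : ∀ x ∈ Set.Icc (-1 : ℝ) 1, hinv (h x) = x)
    (hinvr : ∀ y ∈ Set.Icc (-1 : ℝ) 1, h (hinv y) = y)
    (h'ne : ∀ x ∈ Set.Icc (-1 : ℝ) 1, x ≠ 0 → h' x ≠ 0)
    (h'0 : h' 0 = 0)
    (αp αm M δ : ℝ) (hαp : 0 < αp) (hαm : 0 < αm) (hM : 0 < M)
    (hδ : 0 < δ) (hδ1 : δ ≤ 1)
    (hnfp : ∀ x ∈ Set.Ioo (0 : ℝ) δ,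
      Real.exp (-M) * x ^ αp ≤ h' x ∧ h' x ≤ Real.exp M * x ^ αp)
    (hnfm : ∀ x ∈ Set.Ioo (-δ) (0 : ℝ),
      Real.exp (-M) * |x| ^ αm ≤ h' x ∧ h' x ≤ Real.exp M * |x| ^ αm)
    (f : ℝ → ℝ) (hfdef : ∀ x : ℝ, f x = h (T (hinv x)))
    (ct : ℝ) (hct : ct = h 0) :
    (0 < αp / (αp + 1) ∧ αp / (αp + 1) < 1) ∧
    (0 < αm / (αm + 1) ∧ αm / (αm + 1) < 1) ∧
    ∃ L δ₁ : ℝ, 0 < L ∧ 0 < δ₁ ∧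
      (∀ x ∈ Set.Ioo ct (ct + δ₁),
        L⁻¹ * |x - ct| ^ (-(αp / (αp + 1))) ≤ |deriv f x| ∧
        |deriv f x| ≤ L * |x - ct| ^ (-(αp / (αp + 1)))) ∧
      (∀ x ∈ Set.Ioo (ct - δ₁) ct,
        L⁻¹ * |x - ct| ^ (-(αm / (αm + 1))) ≤ |deriv f x| ∧
        |deriv f x| ≤ L * |x - ct| ^ (-(αm / (αm + 1)))) :=
  lorenz_like_singularity_at_turning_point_general lam hlam1 hlam2 T hT h h' hinv hmono hbij hhd hC1
    hinvl hinvr h'ne αp αm M δ hαp hαm hδ hnfp hnfm f hfdef ct hct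
end
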